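/- arXiv:2107.11911 — 3 statements merged into one kernel-verified Lean document; each statement's English description precedes it below -/
import Mathlib

section
/- The optimal value of the expectation-relaxed N-arm restless bandit problem equals N times the optimal value of the corresponding single-arm relaxed problem, i.e., V-hat_N^* = N * V-hat_1^*. -/
open MeasureTheory ProbabilityTheory Filter Finset

/-- A single-arm finite-horizon restless bandit model: finite state space `S`,
actions `Bool` (pull = `true`), horizon `T`, time-dependent transition kernel `p`,
rewards `r`, common initial state `s0`, and budget ratios `α`. -/
structure Arm (S : Type) [Fintype S] where
  T : ℕ
  p : ℕ → S → Bool → S → ℝ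
  p_nonneg : ∀ t s a s', 0 ≤ p t s a s'
  p_sum : ∀ t s a, ∑ s', p t s a s' = 1
  r : ℕ → S → Bool → ℝ
  s0 : S
  α : ℕ → ℝ

variable {S : Type} [Fintype S] [DecidableEq S]

/-- Feasibility for the single-arm occupation-measure linear program:
nonnegativity, budget constraints, initial condition, and flow balance. -/
def LPFeasible (M : Arm S) (x : ℕ → S → Bool → ℝ) : Prop :=
  (∀ t s a, 0 ≤ x t s a) ∧
  (∀ t, t < M.T → ∑ s, x t s true = M.α t) ∧
  (∀ s a, s ≠ M.s0 → x 0 s a = 0) ∧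
  (∑ s, ∑ a, x 0 s a = 1) ∧
  (∀ t, t + 1 < M.T → ∀ s', ∑ a, x (t + 1) s' a = ∑ s, ∑ a, x t s a * M.p t s a s')

/-- Objective of the occupation-measure LP. -/
def LPobj (M : Arm S) (x : ℕ → S → Bool → ℝ) : ℝ :=
  ∑ t ∈ Finset.range M.T, ∑ s, ∑ a, M.r t s a * x t s a

/-- An optimal occupation measure for the LP relaxation. -/
def LPOptimal (M : Arm S) (x : ℕ → S → Bool → ℝ) : Prop :=
  LPFeasible M x ∧ ∀ y, LPFeasible M y → LPobj M y ≤ LPobj M x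

/-- Marginal state occupation `z_t(s) = ∑_a x_t(s,a)`. -/
def zOf (x : ℕ → S → Bool → ℝ) : ℕ → S → ℝ := fun t s => ∑ a, x t s a

/-- A (Markov, randomized) policy for the joint `N`-arm MDP: at each time `t` and
joint state, a probability distribution over joint actions. -/
def JPolicy (S : Type) (N : ℕ) := ℕ → (Fin N → S) → (Fin N → Bool) → ℝ

/-- Validity of a randomized joint policy: nonnegative action probabilities summing to one. -/
def ValidJ {N : ℕ} (π : JPolicy S N) : Prop :=
  ∀ t σ, (∀ a, 0 ≤ π t σ a) ∧ ∑ a, π t σ a = 1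

/-- Distribution of the joint state at time `t` under policy `π`, all arms starting at `s0`
and transitioning independently according to the kernel `p`. -/
def jdist (M : Arm S) (N : ℕ) (π : JPolicy S N) : ℕ → (Fin N → S) → ℝ
  | 0 => fun σ => if σ = fun _ => M.s0 then 1 else 0
  | t + 1 => fun σ' =>
      ∑ σ : Fin N → S, ∑ a : Fin N → Bool,
        jdist M N π t σ * π t σ a * ∏ i, M.p t (σ i) (a i) (σ' i)

/-- Number of arms pulled by a joint action. -/
def pulls {N : ℕ} (a : Fin N → Bool) : ℕ := ∑ i, if a i then 1 else 0

/-- Expected total reward of the joint `N`-arm MDP under policy `π`. -/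
def jvalue (M : Arm S) (N : ℕ) (π : JPolicy S N) : ℝ :=
  ∑ t ∈ Finset.range M.T, ∑ σ : Fin N → S, ∑ a : Fin N → Bool,
    jdist M N π t σ * π t σ a * ∑ i, M.r t (σ i) (a i)

/-- Hard budget feasibility: the policy almost surely pulls exactly `⌊α_t N⌋` arms. -/
def HardFeasible (M : Arm S) (N : ℕ) (π : JPolicy S N) : Prop :=
  ValidJ π ∧ ∀ t, t < M.T → ∀ σ a, π t σ a ≠ 0 → pulls a = ⌊M.α t * N⌋₊

/-- Relaxed budget feasibility: the expected number of pulls at time `t` equals `α_t N`. -/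
def RelaxFeasible (M : Arm S) (N : ℕ) (π : JPolicy S N) : Prop :=
  ValidJ π ∧ ∀ t, t < M.T →
    ∑ σ : Fin N → S, ∑ a : Fin N → Bool,
      jdist M N π t σ * π t σ a * (pulls a : ℝ) = M.α t * N

/-- Optimal value `V_N^*` of the hard-budget-constrained `N`-arm problem. -/
noncomputable def Vstar (M : Arm S) (N : ℕ) : ℝ :=
  sSup {v | ∃ π : JPolicy S N, HardFeasible M N π ∧ v = jvalue M N π}

/-- Optimal value `V̂_N^*` of the expectation-relaxed `N`-arm problem. -/
noncomputable def Vhat (M : Arm S) (N : ℕ) : ℝ :=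
  sSup {v | ∃ π : JPolicy S N, RelaxFeasible M N π ∧ v = jvalue M N π}

set_option linter.unusedSectionVars false
set_option maxHeartbeats 1000000

lemma sum_prod_pi {X : Type} [Fintype X] {N : ℕ} (f : Fin N → X → ℝ) :
    ∑ σ : Fin N → X, ∏ i, f i (σ i) = ∏ i, ∑ s, f i s := by
  rw [Finset.prod_univ_sum, Fintype.piFinset_univ]

lemma sum_pi_cond {X : Type} [Fintype X] [DecidableEq X] {N : ℕ} (f : Fin N → X → ℝ)
    (hf : ∀ j, ∑ s, f j s = 1) (i : Fin N) (s' : X) :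
    ∑ σ : Fin N → X, (if σ i = s' then ∏ j, f j (σ j) else 0) = f i s' := by
  have h1 : ∀ σ : Fin N → X, (if σ i = s' then ∏ j, f j (σ j) else 0)
      = ∏ j, (if j = i then (if σ j = s' then f j (σ j) else 0) else f j (σ j)) := by
    intro σ
    by_cases h : σ i = s'
    · rw [if_pos h]
      refine Finset.prod_congr rfl fun j _ => ?_
      split_ifs with h1 h2
      · rfl
      · exact absurd (h1 ▸ h) h2
      · rfl
    · rw [if_neg h]
      refine (Finset.prod_eq_zero (Finset.mem_univ i) ?_).symm
      simp [h]
  calc ∑ σ : Fin N → X, (if σ i = s' then ∏ j, f j (σ j) else 0)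
      = ∑ σ : Fin N → X, ∏ j, (if j = i then (if σ j = s' then f j (σ j) else 0) else f j (σ j)) :=
        Finset.sum_congr rfl fun σ _ => h1 σ
    _ = ∏ j, ∑ s, (if j = i then (if s = s' then f j s else 0) else f j s) := by
        rw [sum_prod_pi (fun j s => if j = i then (if s = s' then f j s else 0) else f j s)]
    _ = f i s' := by
        rw [Finset.prod_eq_single i]
        · simp
        · intro j _ hj; simp [hj, hf j]
        · simp

lemma jdist_nonneg (M : Arm S) {N : ℕ} (π : JPolicy S N) (hπ : ValidJ π) :
    ∀ t σ, 0 ≤ jdist M N π t σ := by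
  intro t
  induction t with
  | zero =>
      intro σ; simp only [jdist]; split <;> norm_num
  | succ t ih =>
      intro σ'
      refine Finset.sum_nonneg fun σ _ => Finset.sum_nonneg fun a _ => ?_
      exact mul_nonneg (mul_nonneg (ih σ) ((hπ t σ).1 a))
        (Finset.prod_nonneg fun i _ => M.p_nonneg t (σ i) (a i) (σ' i))

lemma jdist_sum (M : Arm S) {N : ℕ} (π : JPolicy S N) (hπ : ValidJ π) :
    ∀ t, ∑ σ, jdist M N π t σ = 1 := by
  intro t
  induction t with
  | zero => simp [jdist]
  | succ t ih =>
      calc ∑ σ' : Fin N → S, jdist M N π (t + 1) σ'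
          = ∑ σ' : Fin N → S, ∑ σ : Fin N → S, ∑ a : Fin N → Bool,
              jdist M N π t σ * π t σ a * ∏ i, M.p t (σ i) (a i) (σ' i) := rfl
        _ = ∑ σ : Fin N → S, ∑ σ' : Fin N → S, ∑ a : Fin N → Bool,
              jdist M N π t σ * π t σ a * ∏ i, M.p t (σ i) (a i) (σ' i) := Finset.sum_comm
        _ = ∑ σ : Fin N → S, ∑ a : Fin N → Bool, ∑ σ' : Fin N → S,
              jdist M N π t σ * π t σ a * ∏ i, M.p t (σ i) (a i) (σ' i) :=
            Finset.sum_congr rfl fun σ _ => Finset.sum_comm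
        _ = ∑ σ : Fin N → S, ∑ a : Fin N → Bool,
              jdist M N π t σ * π t σ a *
                ∑ σ' : Fin N → S, ∏ i, M.p t (σ i) (a i) (σ' i) := by
            simp_rw [Finset.mul_sum]
        _ = ∑ σ : Fin N → S, ∑ a : Fin N → Bool, jdist M N π t σ * π t σ a := by
            refine Finset.sum_congr rfl fun σ _ => Finset.sum_congr rfl fun a _ => ?_
            rw [sum_prod_pi (fun i s' => M.p t (σ i) (a i) s')]
            simp [M.p_sum]
        _ = 1 := by
            rw [← ih]
            refine Finset.sum_congr rfl fun σ _ => ?_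
            rw [← Finset.mul_sum, (hπ t σ).2, mul_one]

lemma LP_mass (M : Arm S) (x : ℕ → S → Bool → ℝ) (hx : LPFeasible M x) :
    ∀ t, t < M.T → ∑ s, ∑ a, x t s a = 1 := by
  intro t
  induction t with
  | zero => exact fun _ => hx.2.2.2.1
  | succ t ih =>
      intro ht
      have ht' : t < M.T := Nat.lt_of_succ_lt ht
      calc ∑ s', ∑ a, x (t + 1) s' a
          = ∑ s', ∑ s, ∑ a, x t s a * M.p t s a s' :=
            Finset.sum_congr rfl fun s' _ => hx.2.2.2.2 t ht s'
        _ = ∑ s, ∑ a, ∑ s', x t s a * M.p t s a s' := by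
            rw [Finset.sum_comm]
            exact Finset.sum_congr rfl fun s _ => Finset.sum_comm
        _ = ∑ s, ∑ a, x t s a := by
            refine Finset.sum_congr rfl fun s _ => Finset.sum_congr rfl fun a _ => ?_
            rw [← Finset.mul_sum, M.p_sum, mul_one]
        _ = 1 := ih ht'
lemma sum_sum_prod_pi {N : ℕ} (F : Fin N → S → Bool → ℝ) :
    ∑ σ : Fin N → S, ∑ a : Fin N → Bool, ∏ i, F i (σ i) (a i) = ∏ i, ∑ s, ∑ b, F i s b := by
  have h : ∀ σ : Fin N → S, ∑ a : Fin N → Bool, ∏ i, F i (σ i) (a i) = ∏ i, ∑ b, F i (σ i) b :=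
    fun σ => sum_prod_pi (fun i b => F i (σ i) b)
  rw [Finset.sum_congr rfl fun σ _ => h σ, sum_prod_pi (fun i s => ∑ b, F i s b)]

lemma sum_sum_prod_weight {N : ℕ} (F : S → Bool → ℝ) (hF : ∑ s, ∑ b, F s b = 1)
    (G : S → Bool → ℝ) :
    ∑ σ : Fin N → S, ∑ a : Fin N → Bool, (∏ i, F (σ i) (a i)) * (∑ i, G (σ i) (a i))
      = N * ∑ s, ∑ b, F s b * G s b := by
  have key : ∀ i : Fin N, ∑ σ : Fin N → S, ∑ a : Fin N → Bool,
      (∏ j, F (σ j) (a j)) * G (σ i) (a i) = ∑ s, ∑ b, F s b * G s b := by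
    intro i
    have h1 : ∀ (σ : Fin N → S) (a : Fin N → Bool),
        (∏ j, F (σ j) (a j)) * G (σ i) (a i)
          = ∏ j, (if j = i then F (σ j) (a j) * G (σ j) (a j) else F (σ j) (a j)) := by
      intro σ a
      have h2 : ∏ j, (if j = i then F (σ j) (a j) * G (σ j) (a j) else F (σ j) (a j))
          = (F (σ i) (a i) * G (σ i) (a i)) * ∏ j ∈ univ.erase i, F (σ j) (a j) := by
        rw [← Finset.mul_prod_erase univ _ (Finset.mem_univ i), if_pos rfl]
        congr 1
        exact Finset.prod_congr rfl fun j hj => if_neg (Finset.ne_of_mem_erase hj)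
      have h3 : ∏ j, F (σ j) (a j)
          = F (σ i) (a i) * ∏ j ∈ univ.erase i, F (σ j) (a j) :=
        (Finset.mul_prod_erase univ _ (Finset.mem_univ i)).symm
      rw [h2, h3]; ring
    calc ∑ σ : Fin N → S, ∑ a : Fin N → Bool, (∏ j, F (σ j) (a j)) * G (σ i) (a i)
        = ∑ σ : Fin N → S, ∑ a : Fin N → Bool,
            ∏ j, (if j = i then F (σ j) (a j) * G (σ j) (a j) else F (σ j) (a j)) :=
          Finset.sum_congr rfl fun σ _ => Finset.sum_congr rfl fun a _ => h1 σ a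
      _ = ∏ j, ∑ s, ∑ b, (if j = i then F s b * G s b else F s b) :=
          sum_sum_prod_pi (fun j s b => if j = i then F s b * G s b else F s b)
      _ = ∑ s, ∑ b, F s b * G s b := by
          rw [Finset.prod_eq_single i]
          · simp
          · intro j _ hj; simp only [if_neg hj]; exact hF
          · simp
  calc ∑ σ : Fin N → S, ∑ a : Fin N → Bool, (∏ i, F (σ i) (a i)) * (∑ i, G (σ i) (a i))
      = ∑ σ : Fin N → S, ∑ a : Fin N → Bool, ∑ i, (∏ j, F (σ j) (a j)) * G (σ i) (a i) := by
        simp_rw [Finset.mul_sum]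
    _ = ∑ σ : Fin N → S, ∑ i : Fin N, ∑ a : Fin N → Bool,
          (∏ j, F (σ j) (a j)) * G (σ i) (a i) :=
        Finset.sum_congr rfl fun σ _ => Finset.sum_comm
    _ = ∑ i : Fin N, ∑ σ : Fin N → S, ∑ a : Fin N → Bool,
          (∏ j, F (σ j) (a j)) * G (σ i) (a i) := Finset.sum_comm
    _ = ∑ _i : Fin N, ∑ s, ∑ b, F s b * G s b := Finset.sum_congr rfl fun i _ => key i
    _ = N * ∑ s, ∑ b, F s b * G s b := by simp [Finset.sum_const, mul_comm]

lemma exists_policy_of_LP (M : Arm S) (hα0 : ∀ t, t < M.T → 0 ≤ M.α t)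
    (hα1 : ∀ t, t < M.T → M.α t ≤ 1) (N : ℕ) (x : ℕ → S → Bool → ℝ) (hx : LPFeasible M x) :
    ∃ π : JPolicy S N, RelaxFeasible M N π ∧ jvalue M N π = N * LPobj M x := by
  obtain ⟨hxnn, hxbud, hxinit, hxtot, hxflow⟩ := hx
  set αm : ℕ → ℝ := fun t => if t < M.T then M.α t else 0 with hαm
  have hαm0 : ∀ t, 0 ≤ αm t := by
    intro t; simp only [hαm]; split
    · exact hα0 t ‹_›
    · exact le_refl 0
  set z : ℕ → S → ℝ := fun t s => ∑ a, x t s a with hzdef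
  have hz0 : ∀ t s, 0 ≤ z t s := fun t s => Finset.sum_nonneg fun a _ => hxnn t s a
  have hzx : ∀ t s a, x t s a ≤ z t s := by
    intro t s a
    exact Finset.single_le_sum (fun b _ => hxnn t s b) (Finset.mem_univ a)
  set q : ℕ → S → Bool → ℝ :=
    fun t s a => if z t s = 0 then (if a then αm t else 1 - αm t) else x t s a / z t s with hqdef
  have hq0 : ∀ t s a, 0 ≤ q t s a := by
    intro t s a; simp only [hqdef]
    split
    · split
      · exact hαm0 t
      · simp only [hαm, sub_nonneg]; split
        · exact hα1 t ‹_›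
        · norm_num
    · exact div_nonneg (hxnn t s a) (hz0 t s)
  have hqsum : ∀ t s, ∑ a, q t s a = 1 := by
    intro t s; simp only [hqdef]
    split
    · simp
    · rw [Fintype.sum_bool, ← add_div]
      have : x t s true + x t s false = z t s := by
        rw [hzdef]; simp [Fintype.sum_bool]
      rw [this, div_self ‹z t s ≠ 0›]
  have hzq : ∀ t s a, z t s * q t s a = x t s a := by
    intro t s a; simp only [hqdef]
    split
    · rename_i h
      have : x t s a = 0 := le_antisymm (h ▸ hzx t s a) (hxnn t s a)
      rw [h, this, zero_mul]
    · exact mul_div_cancel₀ (x t s a) ‹z t s ≠ 0›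
  set π0 : JPolicy S N := fun t σ a => ∏ i, q t (σ i) (a i) with hπ0
  have hvalid : ValidJ π0 := by
    intro t σ
    refine ⟨fun a => Finset.prod_nonneg fun i _ => hq0 t (σ i) (a i), ?_⟩
    show ∑ a : Fin N → Bool, ∏ i, q t (σ i) (a i) = 1
    rw [sum_prod_pi (fun i b => q t (σ i) b)]
    exact Finset.prod_eq_one fun i _ => hqsum t (σ i)
  have hz00 : ∀ s, z 0 s = if s = M.s0 then 1 else 0 := by
    intro s
    by_cases h : s = M.s0
    · subst h
      rw [if_pos rfl]
      have h2 : ∑ s', z 0 s' = z 0 M.s0 := by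
        refine Finset.sum_eq_single_of_mem M.s0 (Finset.mem_univ _) fun s' _ h' => ?_
        exact Finset.sum_eq_zero fun a _ => hxinit s' a h'
      rw [← h2]; exact hxtot
    · rw [if_neg h]
      exact Finset.sum_eq_zero fun a _ => hxinit s a h
  have hfact : ∀ t, t < M.T → ∀ σ, jdist M N π0 t σ = ∏ i, z t (σ i) := by
    intro t
    induction t with
    | zero =>
        intro _ σ
        by_cases h : σ = fun _ => M.s0
        · subst h
          show (if (fun _ => M.s0) = fun (_ : Fin N) => M.s0 then (1:ℝ) else 0) = _
          rw [if_pos rfl]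
          symm
          refine Finset.prod_eq_one fun i _ => ?_
          rw [hz00, if_pos rfl]
        · show (if σ = fun _ => M.s0 then (1:ℝ) else 0) = _
          rw [if_neg h]
          obtain ⟨i, hi⟩ : ∃ i, σ i ≠ M.s0 := by
            by_contra hc; push_neg at hc; exact h (funext hc)
          symm
          refine Finset.prod_eq_zero (Finset.mem_univ i) ?_
          rw [hz00, if_neg hi]
    | succ t ih =>
        intro ht σ'
        have ht' : t < M.T := Nat.lt_of_succ_lt ht
        calc jdist M N π0 (t + 1) σ'
            = ∑ σ : Fin N → S, ∑ a : Fin N → Bool,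
                jdist M N π0 t σ * π0 t σ a * ∏ i, M.p t (σ i) (a i) (σ' i) := rfl
          _ = ∑ σ : Fin N → S, ∑ a : Fin N → Bool,
                ∏ i, (z t (σ i) * q t (σ i) (a i) * M.p t (σ i) (a i) (σ' i)) := by
              refine Finset.sum_congr rfl fun σ _ => Finset.sum_congr rfl fun a _ => ?_
              rw [ih ht' σ, hπ0]
              rw [← Finset.prod_mul_distrib, ← Finset.prod_mul_distrib]
          _ = ∏ i, ∑ s, ∑ b, z t s * q t s b * M.p t s b (σ' i) :=
              sum_sum_prod_pi (fun i s b => z t s * q t s b * M.p t s b (σ' i))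
          _ = ∏ i, ∑ s, ∑ b, x t s b * M.p t s b (σ' i) := by
              simp_rw [hzq]
          _ = ∏ i, z (t + 1) (σ' i) := by
              refine Finset.prod_congr rfl fun i _ => ?_
              exact (hxflow t ht (σ' i)).symm
  have hxx : ∀ (t : ℕ) (σ : Fin N → S) (a : Fin N → Bool),
      (∏ i, z t (σ i)) * (∏ i, q t (σ i) (a i)) = ∏ i, x t (σ i) (a i) := by
    intro t σ a
    rw [← Finset.prod_mul_distrib]
    exact Finset.prod_congr rfl fun i _ => hzq t (σ i) (a i)
  refine ⟨π0, ⟨hvalid, ?_⟩, ?_⟩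
  · intro t ht
    have hmass : ∑ s, ∑ b, x t s b = 1 :=
      LP_mass M x ⟨hxnn, hxbud, hxinit, hxtot, hxflow⟩ t ht
    calc ∑ σ : Fin N → S, ∑ a : Fin N → Bool, jdist M N π0 t σ * π0 t σ a * (pulls a : ℝ)
        = ∑ σ : Fin N → S, ∑ a : Fin N → Bool,
            (∏ i, x t (σ i) (a i)) * (∑ i, if a i then (1:ℝ) else 0) := by
          refine Finset.sum_congr rfl fun σ _ => Finset.sum_congr rfl fun a _ => ?_
          rw [hfact t ht σ]
          have hps : (pulls a : ℝ) = ∑ i, if a i then (1:ℝ) else 0 := by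
            simp [pulls]
          rw [hps, hπ0, hxx t σ a]
      _ = N * ∑ s, ∑ b, x t s b * (if b then (1:ℝ) else 0) :=
          sum_sum_prod_weight (fun s b => x t s b) hmass (fun s b => if b then 1 else 0)
      _ = M.α t * N := by
          have hb : ∀ s : S, ∑ b, x t s b * (if b then (1:ℝ) else 0) = x t s true := by
            intro s; simp
          rw [Finset.sum_congr rfl fun s _ => hb s, hxbud t ht, mul_comm]
  · calc jvalue M N π0
        = ∑ t ∈ Finset.range M.T, ∑ σ : Fin N → S, ∑ a : Fin N → Bool,
            jdist M N π0 t σ * π0 t σ a * ∑ i, M.r t (σ i) (a i) := rfl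
      _ = ∑ t ∈ Finset.range M.T, (N * ∑ s, ∑ b, x t s b * M.r t s b) := by
          refine Finset.sum_congr rfl fun t htm => ?_
          have ht := Finset.mem_range.mp htm
          have hmass : ∑ s, ∑ b, x t s b = 1 :=
            LP_mass M x ⟨hxnn, hxbud, hxinit, hxtot, hxflow⟩ t ht
          calc ∑ σ : Fin N → S, ∑ a : Fin N → Bool,
                jdist M N π0 t σ * π0 t σ a * ∑ i, M.r t (σ i) (a i)
              = ∑ σ : Fin N → S, ∑ a : Fin N → Bool,
                  (∏ i, x t (σ i) (a i)) * (∑ i, M.r t (σ i) (a i)) := by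
                refine Finset.sum_congr rfl fun σ _ => Finset.sum_congr rfl fun a _ => ?_
                rw [hfact t ht σ, hπ0, hxx t σ a]
            _ = N * ∑ s, ∑ b, x t s b * M.r t s b :=
                sum_sum_prod_weight (fun s b => x t s b) hmass (fun s b => M.r t s b)
      _ = N * LPobj M x := by
          rw [LPobj, Finset.mul_sum]
          refine Finset.sum_congr rfl fun t _ => congrArg (fun y => (N:ℝ) * y) ?_
          exact Finset.sum_congr rfl fun s _ => Finset.sum_congr rfl fun b _ => mul_comm _ _

lemma sum_swap3 {A B C : Type} [Fintype A] [Fintype B] [Fintype C] (f : A → B → C → ℝ) :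
    ∑ a, ∑ b, ∑ c, f a b c = ∑ c, ∑ a, ∑ b, f a b c := by
  calc ∑ a, ∑ b, ∑ c, f a b c
      = ∑ a, ∑ c, ∑ b, f a b c := Finset.sum_congr rfl fun a _ => Finset.sum_comm
    _ = ∑ c, ∑ a, ∑ b, f a b c := Finset.sum_comm

lemma sum_swap4 {A B C D : Type} [Fintype A] [Fintype B] [Fintype C] [Fintype D]
    (f : A → B → C → D → ℝ) :
    ∑ a, ∑ b, ∑ c, ∑ d, f a b c d = ∑ c, ∑ d, ∑ a, ∑ b, f a b c d := by
  calc ∑ a, ∑ b, ∑ c, ∑ d, f a b c d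
      = ∑ a, ∑ c, ∑ b, ∑ d, f a b c d := Finset.sum_congr rfl fun a _ => Finset.sum_comm
    _ = ∑ c, ∑ a, ∑ b, ∑ d, f a b c d := Finset.sum_comm
    _ = ∑ c, ∑ a, ∑ d, ∑ b, f a b c d :=
        Finset.sum_congr rfl fun c _ => Finset.sum_congr rfl fun a _ => Finset.sum_comm
    _ = ∑ c, ∑ d, ∑ a, ∑ b, f a b c d := Finset.sum_congr rfl fun c _ => Finset.sum_comm

lemma double_ite_sum (c : S) (b0 : Bool) (f : S → Bool → ℝ) :
    ∑ s, ∑ b, ((if c = s then (1:ℝ) else 0) * (if b0 = b then 1 else 0)) * f s b = f c b0 := by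
  simp [mul_assoc, boole_mul, Finset.sum_ite_eq]

lemma pulls_cast {N : ℕ} (a : Fin N → Bool) :
    (pulls a : ℝ) = ∑ i, if a i then (1:ℝ) else 0 := by
  simp [pulls]

lemma exists_LP_of_policy (M : Arm S) {N : ℕ} (hN : 0 < N) (π : JPolicy S N)
    (hπ : RelaxFeasible M N π) :
    ∃ x, LPFeasible M x ∧ jvalue M N π = N * LPobj M x := by
  obtain ⟨hval, hbud⟩ := hπ
  have hNR : (N : ℝ) ≠ 0 := Nat.cast_ne_zero.mpr hN.ne'
  set xi : Fin N → ℕ → S → Bool → ℝ := fun i t s b =>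
    ∑ σ : Fin N → S, ∑ a : Fin N → Bool,
      jdist M N π t σ * π t σ a *
        ((if σ i = s then (1:ℝ) else 0) * (if a i = b then 1 else 0)) with hxi
  have hkey : ∀ (i : Fin N) (t : ℕ) (w : S → Bool → ℝ),
      ∑ s, ∑ b, xi i t s b * w s b
        = ∑ σ : Fin N → S, ∑ a : Fin N → Bool,
            jdist M N π t σ * π t σ a * w (σ i) (a i) := by
    intro i t w
    calc ∑ s, ∑ b, xi i t s b * w s b
        = ∑ s, ∑ b, ∑ σ : Fin N → S, ∑ a : Fin N → Bool,
            jdist M N π t σ * π t σ a *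
              (((if σ i = s then (1:ℝ) else 0) * (if a i = b then 1 else 0)) * w s b) := by
          refine Finset.sum_congr rfl fun s _ => Finset.sum_congr rfl fun b _ => ?_
          rw [hxi, Finset.sum_mul]
          refine Finset.sum_congr rfl fun σ _ => ?_
          rw [Finset.sum_mul]
          exact Finset.sum_congr rfl fun a _ => by ring
      _ = ∑ σ : Fin N → S, ∑ a : Fin N → Bool, ∑ s, ∑ b,
            jdist M N π t σ * π t σ a *
              (((if σ i = s then (1:ℝ) else 0) * (if a i = b then 1 else 0)) * w s b) :=
          sum_swap4 _
      _ = ∑ σ : Fin N → S, ∑ a : Fin N → Bool,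
            jdist M N π t σ * π t σ a * w (σ i) (a i) := by
          refine Finset.sum_congr rfl fun σ _ => Finset.sum_congr rfl fun a _ => ?_
          simp_rw [← Finset.mul_sum]
          rw [double_ite_sum (σ i) (a i) w]
  have hxinn : ∀ i t s b, 0 ≤ xi i t s b := by
    intro i t s b
    refine Finset.sum_nonneg fun σ _ => Finset.sum_nonneg fun a _ => ?_
    refine mul_nonneg (mul_nonneg (jdist_nonneg M π hval t σ) ((hval t σ).1 a)) ?_
    refine mul_nonneg ?_ ?_ <;> (split <;> norm_num)
  have hximass : ∀ i t, ∑ s, ∑ b, xi i t s b = 1 := by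
    intro i t
    have h1 : ∑ s, ∑ b, xi i t s b = ∑ s, ∑ b, xi i t s b * (fun (_ : S) (_ : Bool) => (1:ℝ)) s b := by
      simp
    rw [h1, hkey i t (fun _ _ => 1)]
    have h2 : ∀ σ : Fin N → S, ∑ a : Fin N → Bool,
        jdist M N π t σ * π t σ a * 1 = jdist M N π t σ := by
      intro σ
      simp_rw [mul_one, ← Finset.mul_sum]
      rw [(hval t σ).2, mul_one]
    rw [Finset.sum_congr rfl fun σ _ => h2 σ]
    exact jdist_sum M π hval t
  have hinit : ∀ i s b, s ≠ M.s0 → xi i 0 s b = 0 := by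
    intro i s b hs
    refine Finset.sum_eq_zero fun σ _ => Finset.sum_eq_zero fun a _ => ?_
    by_cases hσ : σ = fun _ => M.s0
    · subst hσ
      rw [if_neg (fun h : M.s0 = s => hs h.symm), zero_mul, mul_zero]
    · have : jdist M N π 0 σ = (if σ = fun _ => M.s0 then (1:ℝ) else 0) := rfl
      rw [this, if_neg hσ, zero_mul, zero_mul]
  have hflow : ∀ (i : Fin N) (t : ℕ) (s' : S),
      ∑ b, xi i (t + 1) s' b = ∑ s, ∑ b, xi i t s b * M.p t s b s' := by
    intro i t s'
    have hR : ∑ s, ∑ b, xi i t s b * M.p t s b s'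
        = ∑ σ : Fin N → S, ∑ a : Fin N → Bool,
            jdist M N π t σ * π t σ a * M.p t (σ i) (a i) s' :=
      hkey i t (fun s b => M.p t s b s')
    have hL1 : ∑ b, xi i (t + 1) s' b
        = ∑ s, ∑ b, xi i (t + 1) s b * (if s = s' then (1:ℝ) else 0) := by
      have h1 : ∀ s, ∑ b, xi i (t + 1) s b * (if s = s' then (1:ℝ) else 0)
          = if s = s' then ∑ b, xi i (t + 1) s b else 0 := by
        intro s; split_ifs with h <;> simp
      rw [Finset.sum_congr rfl fun s _ => h1 s, Finset.sum_ite_eq' univ s'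
        (fun s => ∑ b, xi i (t + 1) s b), if_pos (Finset.mem_univ s')]
    have hL2 : ∑ s, ∑ b, xi i (t + 1) s b * (if s = s' then (1:ℝ) else 0)
        = ∑ σ' : Fin N → S, ∑ a : Fin N → Bool,
            jdist M N π (t + 1) σ' * π (t + 1) σ' a * (if σ' i = s' then (1:ℝ) else 0) :=
      hkey i (t + 1) (fun s _ => if s = s' then 1 else 0)
    have hL3 : ∑ σ' : Fin N → S, ∑ a : Fin N → Bool,
        jdist M N π (t + 1) σ' * π (t + 1) σ' a * (if σ' i = s' then (1:ℝ) else 0)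
        = ∑ σ' : Fin N → S, (if σ' i = s' then jdist M N π (t + 1) σ' else 0) := by
      refine Finset.sum_congr rfl fun σ' _ => ?_
      split_ifs with h
      · simp_rw [mul_one]
        rw [← Finset.mul_sum, (hval (t + 1) σ').2, mul_one]
      · simp
    have hL4 : ∑ σ' : Fin N → S, (if σ' i = s' then jdist M N π (t + 1) σ' else 0)
        = ∑ σ : Fin N → S, ∑ a : Fin N → Bool,
            jdist M N π t σ * π t σ a * M.p t (σ i) (a i) s' := by
      calc ∑ σ' : Fin N → S, (if σ' i = s' then jdist M N π (t + 1) σ' else 0)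
          = ∑ σ' : Fin N → S, ∑ σ : Fin N → S, ∑ a : Fin N → Bool,
              (if σ' i = s' then jdist M N π t σ * π t σ a * ∏ j, M.p t (σ j) (a j) (σ' j)
               else 0) := by
            refine Finset.sum_congr rfl fun σ' _ => ?_
            by_cases h : σ' i = s' <;> simp [h, jdist]
        _ = ∑ σ : Fin N → S, ∑ a : Fin N → Bool, ∑ σ' : Fin N → S,
              (if σ' i = s' then jdist M N π t σ * π t σ a * ∏ j, M.p t (σ j) (a j) (σ' j)
               else 0) :=
            (sum_swap3 (fun (σ : Fin N → S) (a : Fin N → Bool) (σ' : Fin N → S) =>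
              if σ' i = s' then jdist M N π t σ * π t σ a * ∏ j, M.p t (σ j) (a j) (σ' j)
              else 0)).symm
        _ = ∑ σ : Fin N → S, ∑ a : Fin N → Bool,
              jdist M N π t σ * π t σ a * M.p t (σ i) (a i) s' := by
            refine Finset.sum_congr rfl fun σ _ => Finset.sum_congr rfl fun a _ => ?_
            have h2 : ∀ σ' : Fin N → S,
                (if σ' i = s' then jdist M N π t σ * π t σ a * ∏ j, M.p t (σ j) (a j) (σ' j)
                 else 0)
                = jdist M N π t σ * π t σ a *
                    (if σ' i = s' then ∏ j, M.p t (σ j) (a j) (σ' j) else 0) := by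
              intro σ'; split_ifs <;> ring
            rw [Finset.sum_congr rfl fun σ' _ => h2 σ', ← Finset.mul_sum,
              sum_pi_cond (fun j s'' => M.p t (σ j) (a j) s'') (fun j => M.p_sum t (σ j) (a j)) i s']
    rw [hL1, hL2, hL3, hL4, hR]
  have hpull : ∀ (i : Fin N) (t : ℕ), ∑ s, xi i t s true
      = ∑ σ : Fin N → S, ∑ a : Fin N → Bool,
          jdist M N π t σ * π t σ a * (if a i then (1:ℝ) else 0) := by
    intro i t
    have h1 : ∀ s, xi i t s true = ∑ b, xi i t s b * (if b then (1:ℝ) else 0) := by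
      intro s; simp
    rw [Finset.sum_congr rfl fun s _ => h1 s]
    exact hkey i t (fun _ b => if b then 1 else 0)
  have hbud' : ∀ t, t < M.T → ∑ i, ∑ s, xi i t s true = M.α t * N := by
    intro t ht
    calc ∑ i, ∑ s, xi i t s true
        = ∑ i : Fin N, ∑ σ : Fin N → S, ∑ a : Fin N → Bool,
            jdist M N π t σ * π t σ a * (if a i then (1:ℝ) else 0) :=
          Finset.sum_congr rfl fun i _ => hpull i t
      _ = ∑ σ : Fin N → S, ∑ a : Fin N → Bool, ∑ i : Fin N,
            jdist M N π t σ * π t σ a * (if a i then (1:ℝ) else 0) :=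
          (sum_swap3 (fun (σ : Fin N → S) (a : Fin N → Bool) (i : Fin N) =>
            jdist M N π t σ * π t σ a * (if a i then (1:ℝ) else 0))).symm
      _ = ∑ σ : Fin N → S, ∑ a : Fin N → Bool,
            jdist M N π t σ * π t σ a * (pulls a : ℝ) := by
          refine Finset.sum_congr rfl fun σ _ => Finset.sum_congr rfl fun a _ => ?_
          rw [← Finset.mul_sum, ← pulls_cast]
      _ = M.α t * N := hbud t ht
  refine ⟨fun t s b => (N:ℝ)⁻¹ * ∑ i, xi i t s b, ⟨?_, ?_, ?_, ?_, ?_⟩, ?_⟩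
  · intro t s b
    exact mul_nonneg (by positivity) (Finset.sum_nonneg fun i _ => hxinn i t s b)
  · intro t ht
    calc ∑ s, (N:ℝ)⁻¹ * ∑ i, xi i t s true
        = (N:ℝ)⁻¹ * ∑ s, ∑ i, xi i t s true := by rw [Finset.mul_sum]
      _ = (N:ℝ)⁻¹ * ∑ i, ∑ s, xi i t s true := by rw [Finset.sum_comm]
      _ = (N:ℝ)⁻¹ * (M.α t * N) := by rw [hbud' t ht]
      _ = M.α t := by
          rw [mul_comm (M.α t) ((N:ℝ)), ← mul_assoc, inv_mul_cancel₀ hNR, one_mul]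
  · intro s b hs
    show (N:ℝ)⁻¹ * ∑ i, xi i 0 s b = 0
    rw [Finset.sum_eq_zero fun i _ => hinit i s b hs, mul_zero]
  · calc ∑ s, ∑ b, (N:ℝ)⁻¹ * ∑ i, xi i 0 s b
        = (N:ℝ)⁻¹ * ∑ s, ∑ b, ∑ i : Fin N, xi i 0 s b := by
          rw [Finset.mul_sum]
          refine Finset.sum_congr rfl fun s _ => ?_
          rw [Finset.mul_sum]
      _ = (N:ℝ)⁻¹ * ∑ i : Fin N, ∑ s, ∑ b, xi i 0 s b := by
          rw [sum_swap3 (fun (s : S) (b : Bool) (i : Fin N) => xi i 0 s b)]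
      _ = (N:ℝ)⁻¹ * ∑ _i : Fin N, (1:ℝ) := by
          rw [Finset.sum_congr rfl fun i _ => hximass i 0]
      _ = 1 := by
          rw [Finset.sum_const, Finset.card_univ, Fintype.card_fin, nsmul_eq_mul, mul_one,
            inv_mul_cancel₀ hNR]
  · intro t _ s'
    calc ∑ b, (N:ℝ)⁻¹ * ∑ i, xi i (t + 1) s' b
        = (N:ℝ)⁻¹ * ∑ i, ∑ b, xi i (t + 1) s' b := by
          rw [← Finset.mul_sum, Finset.sum_comm]
      _ = (N:ℝ)⁻¹ * ∑ i : Fin N, ∑ s, ∑ b, xi i t s b * M.p t s b s' := by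
          rw [Finset.sum_congr rfl fun i _ => hflow i t s']
      _ = (N:ℝ)⁻¹ * ∑ s, ∑ b, ∑ i : Fin N, xi i t s b * M.p t s b s' := by
          rw [sum_swap3 (fun (s : S) (b : Bool) (i : Fin N) => xi i t s b * M.p t s b s')]
      _ = ∑ s, ∑ b, ((N:ℝ)⁻¹ * ∑ i, xi i t s b) * M.p t s b s' := by
          rw [Finset.mul_sum]
          refine Finset.sum_congr rfl fun s _ => ?_
          rw [Finset.mul_sum]
          refine Finset.sum_congr rfl fun b _ => ?_
          rw [← Finset.sum_mul]
          ring
  · rw [LPobj, Finset.mul_sum]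
    refine Finset.sum_congr rfl fun t _ => ?_
    calc ∑ σ : Fin N → S, ∑ a : Fin N → Bool,
          jdist M N π t σ * π t σ a * ∑ i, M.r t (σ i) (a i)
        = ∑ σ : Fin N → S, ∑ a : Fin N → Bool, ∑ i : Fin N,
            jdist M N π t σ * π t σ a * M.r t (σ i) (a i) := by
          simp_rw [Finset.mul_sum]
      _ = ∑ i : Fin N, ∑ σ : Fin N → S, ∑ a : Fin N → Bool,
            jdist M N π t σ * π t σ a * M.r t (σ i) (a i) :=
          sum_swap3 (fun (σ : Fin N → S) (a : Fin N → Bool) (i : Fin N) =>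
            jdist M N π t σ * π t σ a * M.r t (σ i) (a i)) ▸ rfl
      _ = ∑ i : Fin N, ∑ s, ∑ b, xi i t s b * M.r t s b :=
          Finset.sum_congr rfl fun i _ => (hkey i t (fun s b => M.r t s b)).symm
      _ = ∑ s, ∑ b, ∑ i : Fin N, xi i t s b * M.r t s b :=
          (sum_swap3 (fun (s : S) (b : Bool) (i : Fin N) => xi i t s b * M.r t s b)).symm
      _ = ↑N * ∑ s, ∑ b, M.r t s b * ((N:ℝ)⁻¹ * ∑ i, xi i t s b) := by
          rw [Finset.mul_sum]
          refine Finset.sum_congr rfl fun s _ => ?_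
          rw [Finset.mul_sum]
          refine Finset.sum_congr rfl fun b _ => ?_
          rw [← Finset.sum_mul]
          field_simp

noncomputable def aEff (M : Arm S) (t : ℕ) : ℝ := if t < M.T then M.α t else 0

noncomputable def xcan (M : Arm S) : ℕ → S → Bool → ℝ
  | 0 => fun s a => (if s = M.s0 then 1 else 0) * (if a then aEff M 0 else 1 - aEff M 0)
  | (t + 1) => fun s' a =>
      (∑ s, ∑ b, xcan M t s b * M.p t s b s') * (if a then aEff M (t + 1) else 1 - aEff M (t + 1))

lemma exists_LPFeasible (M : Arm S) (hα0 : ∀ t, t < M.T → 0 ≤ M.α t)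
    (hα1 : ∀ t, t < M.T → M.α t ≤ 1) : ∃ x, LPFeasible M x := by
  have ha0 : ∀ t, 0 ≤ aEff M t := by
    intro t; rw [aEff]; split
    · exact hα0 t ‹_›
    · exact le_refl 0
  have ha1 : ∀ t, aEff M t ≤ 1 := by
    intro t; rw [aEff]; split
    · exact hα1 t ‹_›
    · norm_num
  have hg0 : ∀ t (a : Bool), 0 ≤ (if a then aEff M t else 1 - aEff M t) := by
    intro t a; split
    · exact ha0 t
    · linarith [ha1 t]
  have hgsum : ∀ t, (if true then aEff M t else 1 - aEff M t)
      + (if false then aEff M t else 1 - aEff M t) = 1 := by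
    intro t; simp
  have hmain : ∀ t, (∀ s a, 0 ≤ xcan M t s a) ∧ (∑ s, ∑ a, xcan M t s a = 1) := by
    intro t
    induction t with
    | zero =>
        constructor
        · intro s a
          refine mul_nonneg ?_ (hg0 0 a)
          split <;> norm_num
        · show ∑ s, ∑ a : Bool,
            (if s = M.s0 then (1:ℝ) else 0) * (if a then aEff M 0 else 1 - aEff M 0) = 1
          have h : ∀ s : S, ∑ a : Bool,
              (if s = M.s0 then (1:ℝ) else 0) * (if a then aEff M 0 else 1 - aEff M 0)
              = if s = M.s0 then (1:ℝ) else 0 := by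
            intro s
            rw [Fintype.sum_bool]
            show _ * aEff M 0 + _ * (1 - aEff M 0) = _
            ring
          rw [Finset.sum_congr rfl fun s _ => h s]
          simp [Finset.sum_ite_eq']
    | succ t ih =>
        have hC0 : ∀ s', 0 ≤ ∑ s, ∑ b, xcan M t s b * M.p t s b s' := by
          intro s'
          exact Finset.sum_nonneg fun s _ => Finset.sum_nonneg fun b _ =>
            mul_nonneg (ih.1 s b) (M.p_nonneg t s b s')
        have hCsum : ∑ s', ∑ s, ∑ b, xcan M t s b * M.p t s b s' = 1 := by
          calc ∑ s', ∑ s, ∑ b, xcan M t s b * M.p t s b s'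
              = ∑ s, ∑ b, ∑ s', xcan M t s b * M.p t s b s' :=
                (sum_swap3 (fun (s : S) (b : Bool) (s' : S) =>
                  xcan M t s b * M.p t s b s')).symm
            _ = ∑ s, ∑ b, xcan M t s b := by
                refine Finset.sum_congr rfl fun s _ => Finset.sum_congr rfl fun b _ => ?_
                rw [← Finset.mul_sum, M.p_sum, mul_one]
            _ = 1 := ih.2
        constructor
        · intro s' a
          exact mul_nonneg (hC0 s') (hg0 (t + 1) a)
        · show ∑ s', ∑ a : Bool, (∑ s, ∑ b, xcan M t s b * M.p t s b s')
              * (if a then aEff M (t + 1) else 1 - aEff M (t + 1)) = 1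
          have h : ∀ s' : S, ∑ a : Bool, (∑ s, ∑ b, xcan M t s b * M.p t s b s')
                * (if a then aEff M (t + 1) else 1 - aEff M (t + 1))
              = ∑ s, ∑ b, xcan M t s b * M.p t s b s' := by
            intro s'
            rw [Fintype.sum_bool]
            show _ * aEff M (t + 1) + _ * (1 - aEff M (t + 1)) = _
            ring
          rw [Finset.sum_congr rfl fun s' _ => h s']
          exact hCsum
  refine ⟨xcan M, fun t s a => (hmain t).1 s a, ?_, ?_, (hmain 0).2, ?_⟩
  · intro t ht
    have haeq : aEff M t = M.α t := if_pos ht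
    cases t with
    | zero =>
        show ∑ s, (if s = M.s0 then (1:ℝ) else 0) * aEff M 0 = _
        rw [← Finset.sum_mul]
        simp [Finset.sum_ite_eq', haeq]
    | succ t =>
        show ∑ s', (∑ s, ∑ b, xcan M t s b * M.p t s b s') * aEff M (t + 1) = _
        rw [← Finset.sum_mul]
        have hCsum : ∑ s', ∑ s, ∑ b, xcan M t s b * M.p t s b s' = 1 := by
          calc ∑ s', ∑ s, ∑ b, xcan M t s b * M.p t s b s'
              = ∑ s, ∑ b, ∑ s', xcan M t s b * M.p t s b s' :=
                (sum_swap3 (fun (s : S) (b : Bool) (s' : S) =>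
                  xcan M t s b * M.p t s b s')).symm
            _ = ∑ s, ∑ b, xcan M t s b := by
                refine Finset.sum_congr rfl fun s _ => Finset.sum_congr rfl fun b _ => ?_
                rw [← Finset.mul_sum, M.p_sum, mul_one]
            _ = 1 := (hmain t).2
        rw [hCsum, one_mul, haeq]
  · intro s a hs
    show (if s = M.s0 then (1:ℝ) else 0) * _ = 0
    rw [if_neg hs, zero_mul]
  · intro t _ s'
    show ∑ a : Bool, (∑ s, ∑ b, xcan M t s b * M.p t s b s')
        * (if a then aEff M (t + 1) else 1 - aEff M (t + 1)) = _
    rw [Fintype.sum_bool, ← mul_add, hgsum (t + 1), mul_one]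

lemma jvalue_zero (M : Arm S) (π : JPolicy S 0) : jvalue M 0 π = 0 := by
  simp [jvalue]

open Pointwise in
/-- The optimal value of the expectation-relaxed `N`-arm restless bandit
problem equals `N` times the optimal value of the corresponding single-arm relaxed problem:
`V̂_N^* = N · V̂_1^*`. -/
theorem relaxed_value_eq_N_mul_single_arm
    {S : Type} [Fintype S] [DecidableEq S] (M : Arm S) (N : ℕ)
    (hα0 : ∀ t, t < M.T → 0 ≤ M.α t) (hα1 : ∀ t, t < M.T → M.α t ≤ 1) :
    Vhat M N = N * Vhat M 1 := by
  classical
  set C : Set ℝ := {v | ∃ x : ℕ → S → Bool → ℝ, LPFeasible M x ∧ v = LPobj M x} with hC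
  obtain ⟨x0, hx0⟩ := exists_LPFeasible M hα0 hα1
  have hset : ∀ n : ℕ,
      {v | ∃ π : JPolicy S n, RelaxFeasible M n π ∧ v = jvalue M n π} = (n : ℝ) • C := by
    intro n
    ext v
    constructor
    · rintro ⟨π, hπ, rfl⟩
      rcases Nat.eq_zero_or_pos n with hn | hn
      · subst hn
        refine Set.mem_smul_set.mpr ⟨LPobj M x0, ⟨x0, hx0, rfl⟩, ?_⟩
        rw [jvalue_zero M π]
        simp
      · obtain ⟨x, hx, hvx⟩ := exists_LP_of_policy M hn π hπ
        exact Set.mem_smul_set.mpr ⟨LPobj M x, ⟨x, hx, rfl⟩, by rw [smul_eq_mul, ← hvx]⟩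
    · intro hv
      obtain ⟨c, ⟨x, hx, rfl⟩, rfl⟩ := Set.mem_smul_set.mp hv
      obtain ⟨π, hπ, hv'⟩ := exists_policy_of_LP M hα0 hα1 n x hx
      exact ⟨π, hπ, by rw [smul_eq_mul, ← hv']⟩
  have h1 : Vhat M N = sSup ((N : ℝ) • C) := by unfold Vhat; rw [hset N]
  have h2 : Vhat M 1 = sSup ((1 : ℕ) • C : Set ℝ) := by
    unfold Vhat; rw [hset 1]; norm_num
  rw [h1, h2]
  have e1 : ((1 : ℕ) • C : Set ℝ) = ((1 : ℝ) • C : Set ℝ) := by norm_num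
  rw [e1, Real.sSup_smul_of_nonneg (by positivity : (0:ℝ) ≤ (N:ℝ)) C,
    Real.sSup_smul_of_nonneg zero_le_one C]
  simp [smul_eq_mul]
end

section
/- If a policy pi is diffusion regular, then there exists a constant C such that E[||Z-tilde_t^N||_2^2] <= C and E[||X-tilde_t^N||_2^2] <= C for all t in [T] and all N. -/
open MeasureTheory ProbabilityTheory Filter Finset

variable {S : Type} [Fintype S] [DecidableEq S]

/-- A count-based policy for the `N`-arm problem: maps time `t` and the vector of
state counts `Z` to the state-action counts `X` (so `X = π(t, Z)`). -/
def CPolicy (S : Type) := ℕ → (S → ℕ) → S → Bool → ℕ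

/-- Validity of a count policy: every arm receives exactly one action. -/
def ValidC {S : Type} [Fintype S] (π : CPolicy S) : Prop :=
  ∀ t Z s, π t Z s true + π t Z s false = Z s

/-- A count policy respects the hard budget: exactly `⌊α_t N⌋` arms are pulled. -/
def BudgetC {S : Type} [Fintype S] (M : Arm S) (π : CPolicy S) : Prop :=
  ∀ t Z, t < M.T → ∑ s, π t Z s true = ⌊M.α t * (∑ s, Z s : ℕ)⌋₊

/-- Fluid consistency of a count policy with respect to an occupation measure `x`:
whenever the empirical state frequencies converge to `z_t = ∑_a x_t(·,a)`, the
frequencies of the chosen state-action counts converge to `x_t`. -/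
def FluidConsistent {S : Type} [Fintype S] [DecidableEq S] (M : Arm S) (π : CPolicy S)
    (x : ℕ → S → Bool → ℝ) : Prop :=
  ∀ t, t < M.T → ∀ Zs : ℕ → S → ℕ,
    (∀ N, ∑ s, Zs N s = N) →
    (∀ s, Filter.Tendsto (fun N => (Zs N s : ℝ) / N) Filter.atTop (nhds (zOf x t s))) →
    ∀ s a, Filter.Tendsto (fun N => (π t (Zs N) s a : ℝ) / N) Filter.atTop (nhds (x t s a))

/-- Number of arms in state `s` under the joint configuration `σ`. -/
def countOf {S : Type} [Fintype S] [DecidableEq S] {N : ℕ} (σ : Fin N → S) (s : S) : ℕ :=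
  (Finset.univ.filter fun i => σ i = s).card

/-- The coupled `N`-arm state process driven by a count policy `π`, i.i.d. uniform
innovations `U i t` and an inverse-transform update map `F` realizing the kernel `p`:
all arms start at `s0`; at each time, among the arms currently in state `s`, the
`π(t,Z)(s,true)` lowest-indexed ones are pulled, and each arm transitions via `F`. -/
noncomputable def armState {S : Type} [Fintype S] [DecidableEq S] {Ω : Type}
    (M : Arm S) (π : CPolicy S) (F : ℕ → S → Bool → ℝ → S) (U : ℕ → ℕ → Ω → ℝ)
    (N : ℕ) : ℕ → Ω → Fin N → S
  | 0 => fun _ _ => M.s0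
  | t + 1 => fun ω i =>
      let st := armState M π F U N t ω
      let Z : S → ℕ := countOf st
      let a : Bool :=
        decide ((Finset.univ.filter fun j => st j = st i ∧ j < i).card < π t Z (st i) true)
      F t (st i) a (U i t ω)

/-- State counts `Z_t^N(s)` of the coupled process. -/
noncomputable def Zc {S : Type} [Fintype S] [DecidableEq S] {Ω : Type}
    (M : Arm S) (π : CPolicy S) (F : ℕ → S → Bool → ℝ → S) (U : ℕ → ℕ → Ω → ℝ)
    (N t : ℕ) (ω : Ω) : S → ℕ :=
  countOf (armState M π F U N t ω)

/-- State-action counts `X_t^N(s,a) = π(t, Z_t^N)(s,a)` of the coupled process. -/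
noncomputable def Xc {S : Type} [Fintype S] [DecidableEq S] {Ω : Type}
    (M : Arm S) (π : CPolicy S) (F : ℕ → S → Bool → ℝ → S) (U : ℕ → ℕ → Ω → ℝ)
    (N t : ℕ) (ω : Ω) : S → Bool → ℕ :=
  π t (Zc M π F U N t ω)

/-- The standing assumptions on the driving noise: the `U i t` are i.i.d. uniform on
`[0,1]` and `F` realizes the transition kernel `p` by inverse transform. -/
def Innovations {S : Type} [Fintype S] [DecidableEq S] [MeasurableSpace S]
    [DiscreteMeasurableSpace S] {Ω : Type} [MeasurableSpace Ω]
    (M : Arm S) (μ : MeasureTheory.Measure Ω) (F : ℕ → S → Bool → ℝ → S)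
    (U : ℕ → ℕ → Ω → ℝ) : Prop :=
  (∀ i t, Measurable (U i t)) ∧
  ProbabilityTheory.iIndepFun
    (fun q : ℕ × ℕ => U q.1 q.2) μ ∧
  (∀ i t, MeasureTheory.Measure.map (U i t) μ
      = MeasureTheory.volume.restrict (Set.Icc (0 : ℝ) 1)) ∧
  (∀ t s a, Measurable (F t s a)) ∧
  (∀ t s a s', MeasureTheory.volume (Set.Icc (0 : ℝ) 1 ∩ {u | F t s a u = s'})
      = ENNReal.ofReal (M.p t s a s'))

/-- Expected total reward `V_N(π)` of the coupled `N`-arm process under count policy `π`. -/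
noncomputable def Vproc {S : Type} [Fintype S] [DecidableEq S] {Ω : Type} [MeasurableSpace Ω]
    (M : Arm S) (μ : MeasureTheory.Measure Ω) (π : CPolicy S)
    (F : ℕ → S → Bool → ℝ → S) (U : ℕ → ℕ → Ω → ℝ) (N : ℕ) : ℝ :=
  ∑ t ∈ Finset.range M.T,
    ∫ ω, (∑ s, ∑ a, M.r t s a * (Xc M π F U N t ω s a : ℝ)) ∂μ

/-- Diffusion regularity of a count policy `π` relative to an occupation measure `x`
(with marginals `z`): the maps `π̃_{t,N}` induced on the diffusion statistics
`θ = (Z - N z_t)/√N ↦ (π(t,Z) - N x_t)/√N` are (1) uniformly Lipschitz (in `L¹` norm),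
(2) uniformly bounded at `0`, and (3) pointwise convergent as `N → ∞`. -/
def DiffusionRegular {S : Type} [Fintype S] [DecidableEq S] (M : Arm S) (π : CPolicy S)
    (x : ℕ → S → Bool → ℝ) : Prop :=
  ∃ πt : ℕ → ℕ → (S → ℝ) → (S → Bool → ℝ),
    (∀ t N (Z : S → ℕ), 1 ≤ N → ∑ s, Z s = N → ∀ s a,
      (π t Z s a : ℝ) = N * x t s a +
        Real.sqrt N *
          πt t N (fun s' => ((Z s' : ℝ) - N * zOf x t s') / Real.sqrt N) s a) ∧
    (∃ C₁ > (0 : ℝ), ∀ t N θ₁ θ₂,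
      ∑ s, ∑ a, |πt t N θ₁ s a - πt t N θ₂ s a| ≤ C₁ * ∑ s, |θ₁ s - θ₂ s|) ∧
    (∃ C₂ > (0 : ℝ), ∀ t N, ∑ s, ∑ a, |πt t N (fun _ => 0) s a| ≤ C₂) ∧
    (∀ t θ, ∃ lim : S → Bool → ℝ,
      ∀ s a, Filter.Tendsto (fun N => πt t N θ s a) Filter.atTop (nhds (lim s a)))

/-- The diffusion statistic `Z̃_t^N = (Z_t^N - N z_t)/√N` of the coupled process. -/
noncomputable def Ztil {S : Type} [Fintype S] [DecidableEq S] {Ω : Type}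
    (M : Arm S) (π : CPolicy S) (x : ℕ → S → Bool → ℝ)
    (F : ℕ → S → Bool → ℝ → S) (U : ℕ → ℕ → Ω → ℝ) (N t : ℕ) (ω : Ω) : S → ℝ :=
  fun s => ((Zc M π F U N t ω s : ℝ) - N * zOf x t s) / Real.sqrt N

/-- The diffusion statistic `X̃_t^N = (X_t^N - N x_t)/√N` of the coupled process. -/
noncomputable def Xtil {S : Type} [Fintype S] [DecidableEq S] {Ω : Type}
    (M : Arm S) (π : CPolicy S) (x : ℕ → S → Bool → ℝ)
    (F : ℕ → S → Bool → ℝ → S) (U : ℕ → ℕ → Ω → ℝ) (N t : ℕ) (ω : Ω) : S → Bool → ℝ :=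
  fun s a => ((Xc M π F U N t ω s a : ℝ) - N * x t s a) / Real.sqrt N

/-!
Write `Dᵢ` for the centred indicator that arm `i` moves to state `s'` between `t` and `t + 1`.
Because the LP solution satisfies flow balance, the deterministic drift cancels and
`Z̃_{t+1}(s') = N^{-1/2} ∑ᵢ Dᵢ + ∑_{s,a} p_t(s,a,s') X̃_t(s,a)`. The `Dᵢ` are bounded by one
and pairwise orthogonal: `Dᵢ` is a centred function of the fresh innovation `U i t`, which is
independent of the states at time `t` and of `U j t`. Hence the noise term has second moment at
most one, while diffusion regularity bounds `‖X̃_t‖₁` affinely by `‖Z̃_t‖₁`. This gives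
`E‖Z̃_{t+1}‖² ≤ a E‖Z̃_t‖² + b` with `a, b` independent of `N`; starting from `Z̃_0 = 0`, the bound
is uniform over the finite horizon, and the affine bound carries it over to `X̃_t`.
-/

theorem Finset.card_filter_card_filter_lt_lt {α : Type*} [LinearOrder α] (F : Finset α) (m : ℕ) :
    #{i ∈ F | #{j ∈ F | j < i} < m} = min m #F := by
  set e := F.orderEmbOfFin rfl
  have he : ∀ i ∈ F, ∃ a, e a = i := fun i hi => by
    rwa [← Set.mem_range, Finset.range_orderEmbOfFin]
  have hrank : ∀ a, #{j ∈ F | j < e a} = a := fun a => by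
    have : {j ∈ F | j < e a} = (Finset.Iio a).image e := by
      ext j
      simp only [Finset.mem_filter, Finset.mem_image, Finset.mem_Iio]
      constructor
      · rintro ⟨hj, hlt⟩
        obtain ⟨b, rfl⟩ := he j hj
        exact ⟨b, e.lt_iff_lt.mp hlt, rfl⟩
      · rintro ⟨b, hb, rfl⟩
        exact ⟨F.orderEmbOfFin_mem rfl b, e.lt_iff_lt.mpr hb⟩
    rw [this, Finset.card_image_of_injective _ e.injective, Fin.card_Iio]
  have : {i ∈ F | #{j ∈ F | j < i} < m} = ({a : Fin #F | a < m} : Finset _).image e := by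
    ext i
    simp only [Finset.mem_filter, Finset.mem_image, Finset.mem_univ, true_and]
    constructor
    · rintro ⟨hi, hlt⟩
      obtain ⟨a, rfl⟩ := he i hi
      exact ⟨a, by rwa [hrank] at hlt, rfl⟩
    · rintro ⟨a, ha, rfl⟩
      exact ⟨F.orderEmbOfFin_mem rfl a, by rwa [hrank]⟩
  rw [this, Finset.card_image_of_injective _ e.injective, Fin.card_filter_val_lt, min_comm]

theorem sum_countOf {N : ℕ} (σ : Fin N → S) : ∑ s, countOf σ s = N := by
  simpa [countOf] using (Finset.card_eq_sum_card_fiberwise (s := univ) (t := univ)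
    (f := σ) fun i _ => mem_univ (σ i)).symm

def armAction (π : CPolicy S) (t : ℕ) {N : ℕ} (σ : Fin N → S) (i : Fin N) : Bool :=
  decide (#{j | σ j = σ i ∧ j < i} < π t (countOf σ) (σ i) true)

theorem card_armAction_true (π : CPolicy S) (hval : ValidC π) (t : ℕ) {N : ℕ}
    (σ : Fin N → S) (s : S) :
    #{i | σ i = s ∧ armAction π t σ i = true} = π t (countOf σ) s true := by
  have hle : π t (countOf σ) s true ≤ #{i | σ i = s} := by
    have hZ : countOf σ s = #{i | σ i = s} := rfl
    have := hval t (countOf σ) s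
    omega
  rw [← min_eq_left hle, ← Finset.card_filter_card_filter_lt_lt, Finset.filter_filter]
  congr 1
  ext i
  simp only [armAction, Finset.mem_filter, Finset.mem_univ, true_and, decide_eq_true_eq,
    Finset.filter_filter]
  constructor <;> rintro ⟨rfl, h⟩ <;> exact ⟨rfl, h⟩

theorem card_armAction (π : CPolicy S) (hval : ValidC π) (t : ℕ) {N : ℕ}
    (σ : Fin N → S) (s : S) (a : Bool) :
    #{i | σ i = s ∧ armAction π t σ i = a} = π t (countOf σ) s a := by
  cases a
  · have hsplit := Finset.card_filter_add_card_filter_not (s := {i | σ i = s})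
      (p := fun i => armAction π t σ i = true)
    simp only [Finset.filter_filter, Bool.not_eq_true, card_armAction_true π hval] at hsplit
    have hZ : countOf σ s = #{i | σ i = s} := rfl
    have := hval t (countOf σ) s
    omega
  · exact card_armAction_true π hval t σ s

theorem sum_armAction_eq (π : CPolicy S) (hval : ValidC π) (t : ℕ) {N : ℕ}
    (σ : Fin N → S) (f : S → Bool → ℝ) :
    ∑ i, f (σ i) (armAction π t σ i) = ∑ s, ∑ a, (π t (countOf σ) s a : ℝ) * f s a := by
  rw [← Finset.sum_fiberwise_of_maps_to (g := fun i => (σ i, armAction π t σ i))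
    (t := univ) fun i _ => mem_univ _, Fintype.sum_prod_type]
  refine Finset.sum_congr rfl fun s _ => Finset.sum_congr rfl fun a _ => ?_
  have hfiber : ∀ i ∈ ({i | (σ i, armAction π t σ i) = (s, a)} : Finset (Fin N)),
      f (σ i) (armAction π t σ i) = f s a := fun i hi => by
    obtain ⟨hs, ha⟩ := Prod.mk.inj (Finset.mem_filter.mp hi).2
    rw [hs, ha]
  rw [Finset.sum_congr rfl hfiber, Finset.sum_const, nsmul_eq_mul, ← card_armAction π hval t σ s a]
  simp only [Prod.mk.injEq]

section GeneralFacts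

variable {Ω : Type*} [MeasurableSpace Ω] {μ : Measure Ω}

theorem integral_comp_eq_zero_of_indepFun {β γ : Type*} [Fintype β] [MeasurableSpace β]
    [MeasurableSingletonClass β] [MeasurableSpace γ] {X : Ω → β} {V : Ω → γ}
    (hXV : IndepFun X V μ) (hX : Measurable X) (hV : Measurable V) {Φ : β → γ → ℝ}
    (hΦ : ∀ b, Measurable (Φ b)) (hΦV : ∀ b, Integrable (fun ω => Φ b (V ω)) μ)
    (hΦ0 : ∀ b, ∫ ω, Φ b (V ω) ∂μ = 0) :
    ∫ ω, Φ (X ω) (V ω) ∂μ = 0 := by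
  have hfiber : ∀ ω, Φ (X ω) (V ω) = ∑ b, (X ⁻¹' {b}).indicator (fun ω => Φ b (V ω)) ω :=
    fun ω => by
      rw [Finset.sum_eq_single (X ω) (fun b _ hb => Set.indicator_of_notMem (fun h => hb h.symm) _)
        (by simp), Set.indicator_of_mem (s := X ⁻¹' {X ω}) rfl]
  rw [integral_congr_ae (ae_of_all _ hfiber),
    integral_finsetSum _ fun b _ => (hΦV b).indicator (hX (measurableSet_singleton b))]
  refine Finset.sum_eq_zero fun b _ => ?_
  have hind : IndepFun (fun ω => (X ⁻¹' {b}).indicator (1 : Ω → ℝ) ω) (fun ω => Φ b (V ω)) μ :=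
    hXV.comp (φ := Set.indicator {b} 1) (measurable_one.indicator (measurableSet_singleton b))
      (hΦ b)
  calc ∫ ω, (X ⁻¹' {b}).indicator (fun ω => Φ b (V ω)) ω ∂μ
      = ∫ ω, (X ⁻¹' {b}).indicator (1 : Ω → ℝ) ω * Φ b (V ω) ∂μ := by
        refine integral_congr_ae (ae_of_all _ fun ω => ?_)
        by_cases h : ω ∈ X ⁻¹' {b} <;> simp [h]
    _ = 0 := by
        rw [hind.integral_fun_mul_eq_mul_integral
          ((measurable_one.indicator (hX (measurableSet_singleton b))).aestronglyMeasurable)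
          ((hΦ b).comp hV).aestronglyMeasurable, hΦ0 b, mul_zero]

theorem integrable_mul_of_abs_le_one [IsFiniteMeasure μ] {f g : Ω → ℝ}
    (hf : AEStronglyMeasurable f μ) (hg : AEStronglyMeasurable g μ)
    (hf1 : ∀ ω, |f ω| ≤ 1) (hg1 : ∀ ω, |g ω| ≤ 1) :
    Integrable (fun ω => f ω * g ω) μ :=
  .of_bound (hf.mul hg) 1 <| ae_of_all _ fun ω => by
    rw [Real.norm_eq_abs, abs_mul]
    exact mul_le_one₀ (hf1 ω) (abs_nonneg _) (hg1 ω)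

theorem integrable_sq_sum_of_abs_le_one [IsFiniteMeasure μ] {ι : Type*} [Fintype ι]
    {D : ι → Ω → ℝ} (hD : ∀ i, AEStronglyMeasurable (D i) μ) (hD1 : ∀ i ω, |D i ω| ≤ 1) :
    Integrable (fun ω => (∑ i, D i ω) ^ 2) μ := by
  simp_rw [sq, Finset.sum_mul_sum]
  exact integrable_finsetSum _ fun i _ => integrable_finsetSum _ fun j _ =>
    integrable_mul_of_abs_le_one (hD i) (hD j) (hD1 i) (hD1 j)

theorem integral_sq_sum_le_card_of_orthogonal [IsProbabilityMeasure μ] {ι : Type*} [Fintype ι]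
    {D : ι → Ω → ℝ} (hD : ∀ i, AEStronglyMeasurable (D i) μ) (hD1 : ∀ i ω, |D i ω| ≤ 1)
    (horth : ∀ i j, i ≠ j → ∫ ω, D i ω * D j ω ∂μ = 0) :
    ∫ ω, (∑ i, D i ω) ^ 2 ∂μ ≤ Fintype.card ι := by
  have hint : ∀ i j, Integrable (fun ω => D i ω * D j ω) μ := fun i j =>
    integrable_mul_of_abs_le_one (hD i) (hD j) (hD1 i) (hD1 j)
  calc ∫ ω, (∑ i, D i ω) ^ 2 ∂μ = ∑ i, ∑ j, ∫ ω, D i ω * D j ω ∂μ := by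
        simp_rw [sq, Finset.sum_mul_sum]
        rw [integral_finsetSum _ fun i _ => integrable_finsetSum _ fun j _ => hint i j]
        exact Finset.sum_congr rfl fun i _ => integral_finsetSum _ fun j _ => hint i j
    _ = ∑ i, ∫ ω, D i ω * D i ω ∂μ := Finset.sum_congr rfl fun i _ =>
        Finset.sum_eq_single i (fun j _ hji => horth i j hji.symm) (by simp)
    _ ≤ ∑ _i : ι, (1 : ℝ) := Finset.sum_le_sum fun i _ => by
        refine (integral_mono (hint i i) (integrable_const 1) fun ω => ?_).trans (by simp)
        calc D i ω * D i ω = |D i ω| * |D i ω| := (abs_mul_abs_self _).symm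
          _ ≤ 1 := mul_le_one₀ (hD1 i ω) (abs_nonneg _) (hD1 i ω)
    _ = Fintype.card ι := by simp

theorem integral_le_mul_integral_add [IsProbabilityMeasure μ] {f g : Ω → ℝ} {a b : ℝ}
    (hf : 0 ≤ f) (hg : Integrable g μ) (hfg : ∀ ω, f ω ≤ a * g ω + b) :
    ∫ ω, f ω ∂μ ≤ a * ∫ ω, g ω ∂μ + b := by
  calc ∫ ω, f ω ∂μ ≤ ∫ ω, (a * g ω + b) ∂μ :=
        integral_mono_of_nonneg (ae_of_all _ hf) ((hg.const_mul a).add (integrable_const b))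
          (ae_of_all _ hfg)
    _ = a * ∫ ω, g ω ∂μ + b := by
        rw [integral_add (hg.const_mul a) (integrable_const b), integral_const_mul]
        simp

end GeneralFacts

theorem sum_sum_sq_le_sq_sum_sum_abs {ι κ : Type*} [Fintype ι] [Fintype κ] (f : ι → κ → ℝ) :
    ∑ i, ∑ k, f i k ^ 2 ≤ (∑ i, ∑ k, |f i k|) ^ 2 := by
  simp_rw [← Fintype.sum_prod_type', ← sq_abs (f _ _)]
  exact Finset.sum_sq_le_sq_sum_of_nonneg fun _ _ => abs_nonneg _

theorem sq_le_of_le_mul_sum_abs_add {ι : Type*} [Fintype ι] {y a b : ℝ} {g : ι → ℝ}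
    (hy : 0 ≤ y) (h : y ≤ a * ∑ i, |g i| + b) :
    y ^ 2 ≤ 2 * a ^ 2 * Fintype.card ι * ∑ i, g i ^ 2 + 2 * b ^ 2 := by
  have hcs : (∑ i, |g i|) ^ 2 ≤ Fintype.card ι * ∑ i, g i ^ 2 := by
    simpa [sq_abs] using sq_sum_le_card_mul_sum_sq (s := univ) (f := fun i => |g i|)
  calc y ^ 2 ≤ (a * ∑ i, |g i| + b) ^ 2 := pow_le_pow_left₀ hy h 2
    _ ≤ 2 * ((a * ∑ i, |g i|) ^ 2 + b ^ 2) := add_sq_le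
    _ = 2 * a ^ 2 * (∑ i, |g i|) ^ 2 + 2 * b ^ 2 := by ring
    _ ≤ 2 * a ^ 2 * (Fintype.card ι * ∑ i, g i ^ 2) + 2 * b ^ 2 := by gcongr
    _ = 2 * a ^ 2 * Fintype.card ι * ∑ i, g i ^ 2 + 2 * b ^ 2 := by ring

theorem abs_sum_sum_mul_le_sum_sum_abs {ι κ : Type*} [Fintype ι] [Fintype κ] {w f : ι → κ → ℝ}
    (hw : ∀ i k, |w i k| ≤ 1) : |∑ i, ∑ k, w i k * f i k| ≤ ∑ i, ∑ k, |f i k| :=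
  (Finset.abs_sum_le_sum_abs _ _).trans <| Finset.sum_le_sum fun i _ =>
    (Finset.abs_sum_le_sum_abs _ _).trans <| Finset.sum_le_sum fun k _ => by
      rw [abs_mul]
      exact mul_le_of_le_one_left (abs_nonneg _) (hw i k)

theorem exists_forall_le_of_le_mul_add {ι : Type*} {Q : ℕ → ι → ℝ} {T : ℕ} {s : Set ι}
    {a b : ℝ} (ha : 0 ≤ a) (h0 : ∀ i ∈ s, Q 0 i ≤ b)
    (hsucc : ∀ t, t + 1 < T → ∀ i ∈ s, Q (t + 1) i ≤ a * Q t i + b) :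
    ∃ C, ∀ t < T, ∀ i ∈ s, Q t i ≤ C := by
  have hbound : ∀ t, ∃ C, t < T → ∀ i ∈ s, Q t i ≤ C := by
    intro t
    induction t with
    | zero => exact ⟨b, fun _ => h0⟩
    | succ t ih =>
      obtain ⟨C, hC⟩ := ih
      exact ⟨a * C + b, fun ht i hi =>
        (hsucc t ht i hi).trans (by gcongr; exact hC (by omega) i hi)⟩
  choose C hC using hbound
  obtain ⟨C', hC'⟩ := ((Finset.range T).image C).exists_le
  exact ⟨C', fun t ht i hi =>
    (hC t ht i hi).trans (hC' _ (Finset.mem_image_of_mem C (Finset.mem_range.mpr ht)))⟩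

theorem Arm.p_le_one {α : Type} [Fintype α] (M : Arm α) (t : ℕ) (s : α) (a : Bool) (s' : α) :
    M.p t s a s' ≤ 1 :=
  M.p_sum t s a ▸ Finset.single_le_sum (fun s'' _ => M.p_nonneg t s a s'') (mem_univ s')

theorem countOf_const {N : ℕ} (s₀ s : S) :
    countOf (fun _ : Fin N => s₀) s = if s = s₀ then N else 0 := by
  unfold countOf
  split_ifs with hs
  · simp [hs]
  · simp [Ne.symm hs]

theorem LPFeasible.zOf_zero {M : Arm S} {x : ℕ → S → Bool → ℝ} (hx : LPFeasible M x) (s : S) :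
    zOf x 0 s = if s = M.s0 then 1 else 0 := by
  obtain ⟨-, -, hinit, hmass, -⟩ := hx
  have hzero : ∀ s, s ≠ M.s0 → zOf x 0 s = 0 := fun s hs =>
    Finset.sum_eq_zero fun a _ => hinit s a hs
  split_ifs with hs
  · rw [hs, ← hmass]
    exact (Finset.sum_eq_single (f := fun s => zOf x 0 s) M.s0 (fun s _ hs => hzero s hs)
      (by simp)).symm
  · exact hzero s hs

section Measurability

variable {Ω : Type}

abbrev noiseBefore (U : ℕ → ℕ → Ω → ℝ) (t : ℕ) : MeasurableSpace Ω :=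
  ⨆ q ∈ {q : ℕ × ℕ | q.2 < t}, MeasurableSpace.comap (U q.1 q.2) inferInstance

theorem comap_le_noiseBefore (U : ℕ → ℕ → Ω → ℝ) {i t' t : ℕ} (h : t' < t) :
    MeasurableSpace.comap (U i t') inferInstance ≤ noiseBefore U t :=
  le_biSup (fun q : ℕ × ℕ => MeasurableSpace.comap (U q.1 q.2) inferInstance)
    (show (i, t') ∈ {q : ℕ × ℕ | q.2 < t} from h)

theorem noiseBefore_mono (U : ℕ → ℕ → Ω → ℝ) : Monotone (noiseBefore U) := fun _ _ h =>
  iSup₂_le fun _ hq => comap_le_noiseBefore U (lt_of_lt_of_le hq h)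

theorem noiseBefore_le [MeasurableSpace Ω] {U : ℕ → ℕ → Ω → ℝ} (hU : ∀ i t, Measurable (U i t))
    (t : ℕ) : noiseBefore U t ≤ ‹MeasurableSpace Ω› :=
  iSup₂_le fun q _ => (hU q.1 q.2).comap_le

theorem indep_noiseBefore_sup_comap [MeasurableSpace Ω] {μ : Measure Ω} {U : ℕ → ℕ → Ω → ℝ}
    (hU : ∀ i t, Measurable (U i t)) (hind : iIndepFun (fun q : ℕ × ℕ => U q.1 q.2) μ)
    {i j : ℕ} (hij : i ≠ j) (t : ℕ) :
    Indep (noiseBefore U t ⊔ MeasurableSpace.comap (U j t) inferInstance)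
      (MeasurableSpace.comap (U i t) inferInstance) μ := by
  let m : ℕ × ℕ → MeasurableSpace Ω := fun q => MeasurableSpace.comap (U q.1 q.2) inferInstance
  have hdisj : Disjoint {q : ℕ × ℕ | q.2 < t ∨ q = (j, t)} {(i, t)} :=
    Set.disjoint_singleton_right.mpr (by simp [hij])
  exact indep_of_indep_of_le
    (indep_iSup_of_disjoint (m := m) (fun q => (hU q.1 q.2).comap_le) hind.iIndep hdisj)
    (sup_le (biSup_mono fun _ => Or.inl) (le_biSup m (i := (j, t)) (Or.inr rfl)))
    (le_biSup m (Set.mem_singleton (i, t)))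

theorem armState_succ_apply (M : Arm S) (π : CPolicy S) (F : ℕ → S → Bool → ℝ → S)
    (U : ℕ → ℕ → Ω → ℝ) (N t : ℕ) (ω : Ω) (i : Fin N) :
    armState M π F U N (t + 1) ω i =
      F t (armState M π F U N t ω i) (armAction π t (armState M π F U N t ω) i) (U i t ω) :=
  rfl

variable [MeasurableSpace S] [DiscreteMeasurableSpace S]

theorem measurable_armState_succ_apply {m : MeasurableSpace Ω} (M : Arm S) (π : CPolicy S)
    {F : ℕ → S → Bool → ℝ → S} (hF : ∀ t s a, Measurable (F t s a)) (U : ℕ → ℕ → Ω → ℝ)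
    {N t : ℕ} (i : Fin N) (hσ : Measurable[m] (armState M π F U N t))
    (hU : Measurable[m] (U i t)) :
    Measurable[m] fun ω => armState M π F U N (t + 1) ω i :=
  (measurable_from_prod_countable_left
    (f := fun p : ℝ × (Fin N → S) => F t (p.2 i) (armAction π t p.2 i) p.1)
    fun σ => hF t (σ i) (armAction π t σ i)).comp (hU.prodMk hσ)

theorem measurable_armState_noiseBefore (M : Arm S) (π : CPolicy S)
    {F : ℕ → S → Bool → ℝ → S} (hF : ∀ t s a, Measurable (F t s a)) (U : ℕ → ℕ → Ω → ℝ)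
    (N t : ℕ) :
    Measurable[noiseBefore U t] (armState M π F U N t) := by
  induction t with
  | zero => exact measurable_const
  | succ t ih =>
    exact @measurable_pi_lambda Ω (Fin N) (fun _ => S) (noiseBefore U (t + 1)) _ _ fun i =>
      measurable_armState_succ_apply M π hF U i
      (ih.mono (noiseBefore_mono U t.le_succ) le_rfl)
      ((comap_measurable _).mono (comap_le_noiseBefore U t.lt_succ_self) le_rfl)

theorem measurable_armState [MeasurableSpace Ω] (M : Arm S) (π : CPolicy S)
    {F : ℕ → S → Bool → ℝ → S} (hF : ∀ t s a, Measurable (F t s a)) {U : ℕ → ℕ → Ω → ℝ}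
    (hU : ∀ i t, Measurable (U i t)) (N t : ℕ) :
    Measurable (armState M π F U N t) :=
  (measurable_armState_noiseBefore M π hF U N t).mono (noiseBefore_le hU t) le_rfl

theorem integrable_comp_Ztil [MeasurableSpace Ω] {μ : Measure Ω} [IsFiniteMeasure μ] (M : Arm S)
    (π : CPolicy S) (x : ℕ → S → Bool → ℝ) {F : ℕ → S → Bool → ℝ → S}
    (hF : ∀ t s a, Measurable (F t s a)) {U : ℕ → ℕ → Ω → ℝ} (hU : ∀ i t, Measurable (U i t))
    (N t : ℕ) (φ : (S → ℝ) → ℝ) :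
    Integrable (fun ω => φ (Ztil M π x F U N t ω)) μ :=
  (Integrable.of_finite (f := fun σ : Fin N → S =>
    φ fun s => ((countOf σ s : ℝ) - N * zOf x t s) / Real.sqrt N)).comp_measurable
    (measurable_armState M π hF hU N t)

end Measurability

def stepResidual (M : Arm S) (F : ℕ → S → Bool → ℝ → S) (t : ℕ) (s : S) (a : Bool) (s' : S)
    (u : ℝ) : ℝ :=
  (if F t s a u = s' then 1 else 0) - M.p t s a s'

theorem abs_stepResidual_le_one (M : Arm S) (F : ℕ → S → Bool → ℝ → S) (t : ℕ) (s : S)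
    (a : Bool) (s' : S) (u : ℝ) : |stepResidual M F t s a s' u| ≤ 1 := by
  have := M.p_nonneg t s a s'
  have := M.p_le_one t s a s'
  rw [stepResidual, abs_le]
  constructor <;> split_ifs <;> linarith

section Noise

variable {Ω : Type} [MeasurableSpace Ω] [MeasurableSpace S] [DiscreteMeasurableSpace S]

theorem Innovations.measurable_U {μ : Measure Ω} {M : Arm S} {F : ℕ → S → Bool → ℝ → S}
    {U : ℕ → ℕ → Ω → ℝ} (hFU : Innovations M μ F U) : ∀ i t, Measurable (U i t) :=
  hFU.1

theorem Innovations.measurable_F {μ : Measure Ω} {M : Arm S} {F : ℕ → S → Bool → ℝ → S}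
    {U : ℕ → ℕ → Ω → ℝ} (hFU : Innovations M μ F U) : ∀ t s a, Measurable (F t s a) :=
  hFU.2.2.2.1

theorem measurable_stepResidual (M : Arm S) {F : ℕ → S → Bool → ℝ → S}
    (hF : ∀ t s a, Measurable (F t s a)) (t : ℕ) (s : S) (a : Bool) (s' : S) :
    Measurable (stepResidual M F t s a s') :=
  (Measurable.ite (hF t s a (measurableSet_singleton s')) measurable_const
    measurable_const).sub_const _

theorem integrable_stepResidual_comp {μ : Measure Ω} [IsFiniteMeasure μ] (M : Arm S)
    {F : ℕ → S → Bool → ℝ → S} (hF : ∀ t s a, Measurable (F t s a)) {V : Ω → ℝ}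
    (hV : Measurable V) (t : ℕ) (s : S) (a : Bool) (s' : S) :
    Integrable (fun ω => stepResidual M F t s a s' (V ω)) μ :=
  .of_bound ((measurable_stepResidual M hF t s a s').comp hV).aestronglyMeasurable 1
    (ae_of_all _ fun ω => abs_stepResidual_le_one M F t s a s' (V ω))

theorem integral_stepResidual_eq_zero {μ : Measure Ω} {M : Arm S} {F : ℕ → S → Bool → ℝ → S}
    {U : ℕ → ℕ → Ω → ℝ} (hFU : Innovations M μ F U) (i t : ℕ) (s : S) (a : Bool) (s' : S) :
    ∫ ω, stepResidual M F t s a s' (U i t ω) ∂μ = 0 := by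
  obtain ⟨hU, -, hlaw, hF, hvol⟩ := hFU
  have hA : MeasurableSet {u : ℝ | F t s a u = s'} := hF t s a (measurableSet_singleton s')
  have hres : stepResidual M F t s a s' =
      fun u => {u | F t s a u = s'}.indicator 1 u - M.p t s a s' := by
    ext u
    simp [stepResidual, Set.indicator_apply]
  have : IsProbabilityMeasure (volume.restrict (Set.Icc (0 : ℝ) 1)) :=
    ⟨by simp [Real.volume_Icc]⟩
  rw [← integral_map (hU i t).aemeasurable
    (measurable_stepResidual M hF t s a s').aestronglyMeasurable, hlaw i t, hres,
    integral_sub ((integrable_const 1).indicator hA) (integrable_const _),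
    integral_indicator_one hA, integral_const, measureReal_restrict_apply hA, Set.inter_comm,
    measureReal_def, hvol, ENNReal.toReal_ofReal (M.p_nonneg t s a s')]
  simp

noncomputable def transitionNoise (M : Arm S) (π : CPolicy S) (F : ℕ → S → Bool → ℝ → S)
    (U : ℕ → ℕ → Ω → ℝ) (N t : ℕ) (s' : S) (i : Fin N) (ω : Ω) : ℝ :=
  stepResidual M F t (armState M π F U N t ω i) (armAction π t (armState M π F U N t ω) i) s'
    (U i t ω)

theorem measurable_transitionNoise (M : Arm S) (π : CPolicy S) {F : ℕ → S → Bool → ℝ → S}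
    (hF : ∀ t s a, Measurable (F t s a)) {U : ℕ → ℕ → Ω → ℝ} (hU : ∀ i t, Measurable (U i t))
    (N t : ℕ) (s' : S) (i : Fin N) :
    Measurable (transitionNoise M π F U N t s' i) :=
  (measurable_from_prod_countable_left
    (f := fun p : ℝ × (Fin N → S) => stepResidual M F t (p.2 i) (armAction π t p.2 i) s' p.1)
    fun σ => measurable_stepResidual M hF t (σ i) (armAction π t σ i) s').comp
    ((hU i t).prodMk (measurable_armState M π hF hU N t))

theorem indepFun_armState_innovation {μ : Measure Ω} {M : Arm S} (π : CPolicy S)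
    {F : ℕ → S → Bool → ℝ → S} {U : ℕ → ℕ → Ω → ℝ} (hFU : Innovations M μ F U) {N : ℕ}
    (t : ℕ) {i j : Fin N} (hij : i ≠ j) :
    IndepFun (fun ω => (armState M π F U N t ω, armState M π F U N (t + 1) ω j)) (U i t) μ := by
  have hF := hFU.measurable_F
  have hσ : Measurable[noiseBefore U t ⊔ MeasurableSpace.comap (U j t) inferInstance]
      (armState M π F U N t) :=
    (measurable_armState_noiseBefore M π hF U N t).mono le_sup_left le_rfl
  have hX := hσ.prodMk (measurable_armState_succ_apply M π hF U j hσ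
    ((comap_measurable _).mono le_sup_right le_rfl))
  exact (IndepFun_iff_Indep _ _ _).mpr <| indep_of_indep_of_le_left
    (indep_noiseBefore_sup_comap hFU.measurable_U hFU.2.1 (Fin.val_injective.ne hij) t) hX.comap_le

theorem integral_transitionNoise_mul_eq_zero {μ : Measure Ω} [IsFiniteMeasure μ] {M : Arm S}
    (π : CPolicy S) {F : ℕ → S → Bool → ℝ → S} {U : ℕ → ℕ → Ω → ℝ}
    (hFU : Innovations M μ F U) {N : ℕ} (t : ℕ) (s' : S) {i j : Fin N} (hij : i ≠ j) :
    ∫ ω, transitionNoise M π F U N t s' i ω * transitionNoise M π F U N t s' j ω ∂μ = 0 := by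
  have hU := hFU.measurable_U
  have hF := hFU.measurable_F
  let Φ : (Fin N → S) × S → ℝ → ℝ := fun b u =>
    stepResidual M F t (b.1 i) (armAction π t b.1 i) s' u *
      ((if b.2 = s' then 1 else 0) - M.p t (b.1 j) (armAction π t b.1 j) s')
  change ∫ ω, Φ (armState M π F U N t ω, armState M π F U N (t + 1) ω j) (U i t ω) ∂μ = 0
  refine integral_comp_eq_zero_of_indepFun (indepFun_armState_innovation π hFU t hij)
    ((measurable_armState M π hF hU N t).prodMk
      (measurable_armState_succ_apply M π hF U j (measurable_armState M π hF hU N t) (hU j t)))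
    (hU i t) (fun b => (measurable_stepResidual M hF t _ _ s').mul_const _)
    (fun b => (integrable_stepResidual_comp M hF (hU i t) t _ _ s').mul_const _) fun b => ?_
  rw [integral_mul_const, integral_stepResidual_eq_zero hFU, zero_mul]

theorem integral_sq_sum_transitionNoise_le {μ : Measure Ω} [IsProbabilityMeasure μ] {M : Arm S}
    (π : CPolicy S) {F : ℕ → S → Bool → ℝ → S} {U : ℕ → ℕ → Ω → ℝ}
    (hFU : Innovations M μ F U) (N t : ℕ) (s' : S) :
    ∫ ω, (∑ i, transitionNoise M π F U N t s' i ω) ^ 2 ∂μ ≤ N := by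
  have hD := measurable_transitionNoise M π hFU.measurable_F hFU.measurable_U N t s'
  simpa using integral_sq_sum_le_card_of_orthogonal (fun i => (hD i).aestronglyMeasurable)
    (fun i ω => abs_stepResidual_le_one M F t _ _ s' _)
    fun i j hij => integral_transitionNoise_mul_eq_zero π hFU t s' hij

end Noise

section Dynamics

variable {Ω : Type}

theorem Ztil_zero {M : Arm S} {x : ℕ → S → Bool → ℝ} (hx : LPFeasible M x) (π : CPolicy S)
    (F : ℕ → S → Bool → ℝ → S) (U : ℕ → ℕ → Ω → ℝ) (N : ℕ) (ω : Ω) :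
    Ztil M π x F U N 0 ω = 0 := by
  ext s
  change ((countOf (fun _ : Fin N => M.s0) s : ℝ) - N * zOf x 0 s) / Real.sqrt N = 0
  rw [countOf_const, hx.zOf_zero]
  split_ifs <;> simp

theorem Ztil_succ {M : Arm S} {x : ℕ → S → Bool → ℝ} (hx : LPFeasible M x) {π : CPolicy S}
    (hval : ValidC π) (F : ℕ → S → Bool → ℝ → S) (U : ℕ → ℕ → Ω → ℝ) {N t : ℕ}
    (ht : t + 1 < M.T) (ω : Ω) (s' : S) :
    Ztil M π x F U N (t + 1) ω s' =
      (∑ i, transitionNoise M π F U N t s' i ω) / Real.sqrt N +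
        ∑ s, ∑ a, M.p t s a s' * Xtil M π x F U N t ω s a := by
  have hcount : (Zc M π F U N (t + 1) ω s' : ℝ) = ∑ i, transitionNoise M π F U N t s' i ω +
      ∑ s, ∑ a, (Xc M π F U N t ω s a : ℝ) * M.p t s a s' := by
    simp only [Xc, Zc]
    rw [← sum_armAction_eq π hval t (armState M π F U N t ω) fun s a => M.p t s a s',
      ← Finset.sum_add_distrib, countOf, Finset.card_filter, Nat.cast_sum]
    refine Finset.sum_congr rfl fun i _ => ?_
    rw [armState_succ_apply, transitionNoise, stepResidual]
    push_cast
    ring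
  have hflow : zOf x (t + 1) s' = ∑ s, ∑ a, x t s a * M.p t s a s' := hx.2.2.2.2 t ht s'
  simp only [Ztil, Xtil, hcount, hflow, Finset.mul_sum, ← mul_div_assoc, ← Finset.sum_div,
    ← add_div]
  rw [add_sub_assoc, ← Finset.sum_sub_distrib]
  congr 2
  refine Finset.sum_congr rfl fun s _ => ?_
  rw [← Finset.sum_sub_distrib]
  exact Finset.sum_congr rfl fun a _ => by ring

theorem DiffusionRegular.exists_sum_abs_Xtil_le {M : Arm S} {π : CPolicy S}
    {x : ℕ → S → Bool → ℝ} (hdr : DiffusionRegular M π x) :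
    ∃ C₁ C₂ : ℝ, ∀ (F : ℕ → S → Bool → ℝ → S) (U : ℕ → ℕ → Ω → ℝ) (N t : ℕ) (ω : Ω), 1 ≤ N →
      ∑ s, ∑ a, |Xtil M π x F U N t ω s a| ≤ C₁ * ∑ s, |Ztil M π x F U N t ω s| + C₂ := by
  obtain ⟨πt, hrep, ⟨C₁, -, hLip⟩, ⟨C₂, -, hB0⟩, -⟩ := hdr
  refine ⟨C₁, C₂, fun F U N t ω hN => ?_⟩
  have hsqrt : Real.sqrt N ≠ 0 := by positivity
  have hX : Xtil M π x F U N t ω = πt t N (Ztil M π x F U N t ω) := by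
    ext s a
    rw [Xtil, Xc, hrep t N (Zc M π F U N t ω) hN (sum_countOf _), add_sub_cancel_left,
      mul_div_cancel_left₀ _ hsqrt]
    rfl
  set θ := Ztil M π x F U N t ω
  calc ∑ s, ∑ a, |Xtil M π x F U N t ω s a|
      ≤ ∑ s, ∑ a, (|πt t N θ s a - πt t N (fun _ => 0) s a| + |πt t N (fun _ => 0) s a|) := by
        rw [hX]
        gcongr with s _ a _
        linarith [abs_sub_abs_le_abs_sub (πt t N θ s a) (πt t N (fun _ => 0) s a)]
    _ ≤ C₁ * ∑ s, |θ s - 0| + C₂ := by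
        simp only [Finset.sum_add_distrib]
        exact add_le_add (hLip t N θ _) (hB0 t N)
    _ = C₁ * ∑ s, |θ s| + C₂ := by simp

variable [MeasurableSpace Ω] [MeasurableSpace S] [DiscreteMeasurableSpace S] {μ : Measure Ω}
  [IsProbabilityMeasure μ]

theorem integral_sq_Ztil_succ_le {M : Arm S} {x : ℕ → S → Bool → ℝ} (hx : LPFeasible M x)
    {π : CPolicy S} (hval : ValidC π) {F : ℕ → S → Bool → ℝ → S} {U : ℕ → ℕ → Ω → ℝ}
    (hFU : Innovations M μ F U) {N t : ℕ} (hN : 1 ≤ N) (ht : t + 1 < M.T) {K L : ℝ}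
    (hXZ : ∀ ω, (∑ s, ∑ a, |Xtil M π x F U N t ω s a|) ^ 2 ≤
      K * ∑ s, Ztil M π x F U N t ω s ^ 2 + L) (s' : S) :
    ∫ ω, Ztil M π x F U N (t + 1) ω s' ^ 2 ∂μ ≤
      2 + 2 * (K * ∫ ω, ∑ s, Ztil M π x F U N t ω s ^ 2 ∂μ + L) := by
  have hU := hFU.measurable_U
  have hF := hFU.measurable_F
  let A : Ω → ℝ := fun ω => (∑ i, transitionNoise M π F U N t s' i ω) ^ 2 / N
  have hA : ∫ ω, A ω ∂μ ≤ 1 := by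
    rw [integral_div, div_le_one (by positivity)]
    exact integral_sq_sum_transitionNoise_le π hFU N t s'
  have hAint : Integrable A μ := (integrable_sq_sum_of_abs_le_one
    (fun i => (measurable_transitionNoise M π hF hU N t s' i).aestronglyMeasurable)
    fun i ω => abs_stepResidual_le_one M F t _ _ s' _).div_const _
  have hZ : Integrable (fun ω => ∑ s, Ztil M π x F U N t ω s ^ 2) μ :=
    integrable_comp_Ztil M π x hF hU N t fun θ => ∑ s, θ s ^ 2
  have hZint : Integrable (fun ω => K * ∑ s, Ztil M π x F U N t ω s ^ 2 + L) μ :=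
    (hZ.const_mul K).add (integrable_const L)
  have hp : ∀ s a, |M.p t s a s'| ≤ 1 := fun s a =>
    (abs_of_nonneg (M.p_nonneg t s a s')).trans_le (M.p_le_one t s a s')
  have hpt : ∀ ω, Ztil M π x F U N (t + 1) ω s' ^ 2 ≤
      2 * A ω + 2 * (K * ∑ s, Ztil M π x F U N t ω s ^ 2 + L) := fun ω => by
    rw [Ztil_succ hx hval F U ht ω s']
    refine add_sq_le.trans ?_
    rw [mul_add, div_pow, Real.sq_sqrt (Nat.cast_nonneg N)]
    gcongr
    rw [← sq_abs]
    exact (pow_le_pow_left₀ (abs_nonneg _) (abs_sum_sum_mul_le_sum_sum_abs hp) 2).trans (hXZ ω)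
  calc ∫ ω, Ztil M π x F U N (t + 1) ω s' ^ 2 ∂μ
      ≤ ∫ ω, (2 * A ω + 2 * (K * ∑ s, Ztil M π x F U N t ω s ^ 2 + L)) ∂μ :=
        integral_mono_of_nonneg (ae_of_all _ fun _ => sq_nonneg _)
          ((hAint.const_mul 2).add (hZint.const_mul 2)) (ae_of_all _ hpt)
    _ = 2 * ∫ ω, A ω ∂μ + 2 * (K * ∫ ω, ∑ s, Ztil M π x F U N t ω s ^ 2 ∂μ + L) := by
        rw [integral_add (hAint.const_mul 2) (hZint.const_mul 2), integral_const_mul,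
          integral_const_mul, integral_add (hZ.const_mul K) (integrable_const L),
          integral_const_mul]
        simp only [integral_const, probReal_univ, one_smul]
    _ ≤ 2 + 2 * (K * ∫ ω, ∑ s, Ztil M π x F U N t ω s ^ 2 ∂μ + L) := by linarith

theorem integral_sum_sq_Ztil_succ_le {M : Arm S} {x : ℕ → S → Bool → ℝ} (hx : LPFeasible M x)
    {π : CPolicy S} (hval : ValidC π) {F : ℕ → S → Bool → ℝ → S} {U : ℕ → ℕ → Ω → ℝ}
    (hFU : Innovations M μ F U) {N t : ℕ} (hN : 1 ≤ N) (ht : t + 1 < M.T) {K L : ℝ}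
    (hXZ : ∀ ω, (∑ s, ∑ a, |Xtil M π x F U N t ω s a|) ^ 2 ≤
      K * ∑ s, Ztil M π x F U N t ω s ^ 2 + L) :
    ∫ ω, ∑ s, Ztil M π x F U N (t + 1) ω s ^ 2 ∂μ ≤
      Fintype.card S * (2 + 2 * (K * ∫ ω, ∑ s, Ztil M π x F U N t ω s ^ 2 ∂μ + L)) := by
  rw [integral_finsetSum _ fun s _ =>
    integrable_comp_Ztil M π x hFU.measurable_F hFU.measurable_U N (t + 1) fun θ => θ s ^ 2]
  refine (Finset.sum_le_sum fun s' _ =>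
    integral_sq_Ztil_succ_le hx hval hFU hN ht hXZ s').trans_eq ?_
  rw [Finset.sum_const, Finset.card_univ, nsmul_eq_mul]

end Dynamics

/-- If a policy `π` is diffusion regular, then the second moments of the
diffusion statistics are uniformly bounded: there is a constant `C` with
`E‖Z̃_t^N‖₂² ≤ C` and `E‖X̃_t^N‖₂² ≤ C` for all `t ∈ [T]` and all `N`. -/
theorem diffusionRegular_implies_second_moment_bound
    {S : Type} [Fintype S] [DecidableEq S] [MeasurableSpace S] [DiscreteMeasurableSpace S]
    {Ω : Type} [MeasurableSpace Ω] (μ : MeasureTheory.Measure Ω)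
    [MeasureTheory.IsProbabilityMeasure μ]
    (M : Arm S) (x : ℕ → S → Bool → ℝ) (hx : LPOptimal M x)
    (π : CPolicy S) (hval : ValidC π) (hdr : DiffusionRegular M π x)
    (F : ℕ → S → Bool → ℝ → S) (U : ℕ → ℕ → Ω → ℝ) (hFU : Innovations M μ F U) :
    ∃ C : ℝ, ∀ t, t < M.T → ∀ N : ℕ, 1 ≤ N →
      (∫ ω, (∑ s, (Ztil M π x F U N t ω s) ^ 2) ∂μ) ≤ C ∧
      (∫ ω, (∑ s, ∑ a, (Xtil M π x F U N t ω s a) ^ 2) ∂μ) ≤ C := by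
  obtain ⟨C₁, C₂, hX⟩ := hdr.exists_sum_abs_Xtil_le (Ω := Ω)
  set K := 2 * C₁ ^ 2 * Fintype.card S
  have hXZ : ∀ N t ω, 1 ≤ N → (∑ s, ∑ a, |Xtil M π x F U N t ω s a|) ^ 2 ≤
      K * ∑ s, Ztil M π x F U N t ω s ^ 2 + 2 * C₂ ^ 2 := fun N t ω hN =>
    sq_le_of_le_mul_sum_abs_add (by positivity) (hX F U N t ω hN)
  obtain ⟨C, hC⟩ := exists_forall_le_of_le_mul_add (s := Set.Ici 1) (T := M.T)
    (Q := fun t N => ∫ ω, ∑ s, Ztil M π x F U N t ω s ^ 2 ∂μ)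
    (a := 2 * Fintype.card S * K) (b := Fintype.card S * (2 + 2 * (2 * C₂ ^ 2)))
    (by positivity) (fun N _ => by simp [Ztil_zero hx.1]; positivity)
    fun t ht N hN => (integral_sum_sq_Ztil_succ_le hx.1 hval hFU hN ht (hXZ N t · hN)).trans_eq
      (by ring)
  refine ⟨max C (K * C + 2 * C₂ ^ 2), fun t ht N hN => ⟨(hC t ht N hN).trans (le_max_left _ _), ?_⟩⟩
  calc ∫ ω, ∑ s, ∑ a, Xtil M π x F U N t ω s a ^ 2 ∂μ
      ≤ K * ∫ ω, ∑ s, Ztil M π x F U N t ω s ^ 2 ∂μ + 2 * C₂ ^ 2 :=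
        integral_le_mul_integral_add (fun ω => by positivity)
          (integrable_comp_Ztil M π x hFU.measurable_F hFU.measurable_U N t fun θ => ∑ s, θ s ^ 2)
          fun ω => (sum_sum_sq_le_sq_sum_sum_abs _).trans (hXZ N t ω hN)
    _ ≤ K * C + 2 * C₂ ^ 2 := by gcongr; exact hC t ht N hN
    _ ≤ max C (K * C + 2 * C₂ ^ 2) := le_max_right _ _
end

section
/- On the event Delta_t that the total number of arms in fluid-active states is at most the budget alpha_t N, and the budget is at most the total number of arms in fluid-active plus fluid-neutral states, the fluid-priority policy and its budget-relaxed version make identical decisions: pi_R(t, Z_t^N) = pi_F(t, Z_t^N). -/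
open MeasureTheory ProbabilityTheory Filter Finset

variable {S : Type} [Fintype S] [DecidableEq S]

/-- A state is fluid-active at time `t`: `x_t(s,1) > 0` and `x_t(s,0) = 0`. -/
def isActive {S : Type} (x : ℕ → S → Bool → ℝ) (t : ℕ) (s : S) : Prop :=
  0 < x t s true ∧ x t s false = 0

/-- A state is fluid-neutral at time `t`: `x_t(s,1) > 0` and `x_t(s,0) > 0`. -/
def isNeutral {S : Type} (x : ℕ → S → Bool → ℝ) (t : ℕ) (s : S) : Prop :=
  0 < x t s true ∧ 0 < x t s false

/-- A state is fluid-inactive at time `t`: `x_t(s,1) = 0`. -/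
def isInactive {S : Type} (x : ℕ → S → Bool → ℝ) (t : ℕ) (s : S) : Prop :=
  x t s true = 0

/-- Greedily allocate a budget along a list of (state, capacity) pairs, giving each entry
`min(remaining budget, capacity)`; returns the total allocated to each state. -/
def greedyAlloc {S : Type} [DecidableEq S] : ℕ → List (S × ℕ) → S → ℕ
  | _, [] => fun _ => 0
  | B, sc :: rest => fun s' =>
      (if s' = sc.1 then min B sc.2 else 0) + greedyAlloc (B - min B sc.2) rest s'

/-- A valid priority ordering of the states: a duplicate-free enumeration of all states,
sorted in decreasing order of the priority score `P t`. -/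
def OrdOK {S : Type} [Fintype S] (P : ℕ → S → ℝ) (ord : ℕ → List S) : Prop :=
  ∀ t, (ord t).Nodup ∧ (∀ s : S, s ∈ ord t) ∧
    (ord t).Pairwise (fun s s' => P t s' ≤ P t s)

open Classical in
/-- Number of arms pulled in each state by the fluid-priority policy (Algorithm 1):
with budget `B_t = ⌊α_t N⌋`, first pull fluid-active arms in priority order, then
fluid-neutral arms up to the proportions `⌊N x_t(s,1)⌋` of the occupation measure, then
remaining (undecided) fluid-neutral arms, and finally fluid-inactive arms. -/
noncomputable def fpPull {S : Type} [Fintype S] [DecidableEq S] (M : Arm S)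
    (x : ℕ → S → Bool → ℝ) (ord : ℕ → List S) (t : ℕ) (Z : S → ℕ) : S → ℕ :=
  let N : ℕ := ∑ s, Z s
  let B : ℕ := ⌊M.α t * N⌋₊
  let caps : List (S × ℕ) :=
    ((ord t).filter fun s => decide (isActive x t s)).map (fun s => (s, Z s)) ++
    ((ord t).filter fun s => decide (isNeutral x t s)).map
      (fun s => (s, min (Z s) ⌊(N : ℝ) * x t s true⌋₊)) ++
    ((ord t).filter fun s => decide (isNeutral x t s)).map
      (fun s => (s, Z s - min (Z s) ⌊(N : ℝ) * x t s true⌋₊)) ++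
    ((ord t).filter fun s => decide (isInactive x t s)).map (fun s => (s, Z s))
  greedyAlloc B caps

/-- The fluid-priority policy as a count policy. -/
noncomputable def fpPolicy {S : Type} [Fintype S] [DecidableEq S] (M : Arm S)
    (x : ℕ → S → Bool → ℝ) (ord : ℕ → List S) : CPolicy S := fun t Z s a =>
  if a then fpPull M x ord t Z s else Z s - fpPull M x ord t Z s

open Classical in
/-- Number of arms pulled in each state by the budget-relaxed fluid-priority policy
(Algorithm 2): pull ALL fluid-active arms (possibly exceeding the budget), then pull
fluid-neutral arms with the remaining budget exactly as the fluid-priority policy does,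
and never pull fluid-inactive arms. -/
noncomputable def rpPull {S : Type} [Fintype S] [DecidableEq S] (M : Arm S)
    (x : ℕ → S → Bool → ℝ) (ord : ℕ → List S) (t : ℕ) (Z : S → ℕ) : S → ℕ :=
  let N : ℕ := ∑ s, Z s
  let B : ℕ := ⌊M.α t * N⌋₊
  let B' : ℕ := B - ∑ s, if isActive x t s then Z s else 0
  let caps : List (S × ℕ) :=
    ((ord t).filter fun s => decide (isNeutral x t s)).map
      (fun s => (s, min (Z s) ⌊(N : ℝ) * x t s true⌋₊)) ++
    ((ord t).filter fun s => decide (isNeutral x t s)).map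
      (fun s => (s, Z s - min (Z s) ⌊(N : ℝ) * x t s true⌋₊))
  fun s => (if isActive x t s then Z s else 0) + greedyAlloc B' caps s

/-- The budget-relaxed fluid-priority policy as a count policy. -/
noncomputable def rpPolicy {S : Type} [Fintype S] [DecidableEq S] (M : Arm S)
    (x : ℕ → S → Bool → ℝ) (ord : ℕ → List S) : CPolicy S := fun t Z s a =>
  if a then rpPull M x ord t Z s else Z s - rpPull M x ord t Z s

/-- Non-degeneracy of an occupation measure: at every time there is at least one
fluid-neutral state. -/
def NonDegenerate {S : Type} [Fintype S] (M : Arm S) (x : ℕ → S → Bool → ℝ) : Prop :=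
  ∀ t, t < M.T → ∃ s : S, isNeutral x t s

open Classical in
/-- The event `Δ_t`: the number of arms in fluid-active states is at most the budget
`α_t N`, which in turn is at most the number of arms in fluid-active plus fluid-neutral
states. -/
noncomputable def DeltaEvent {S : Type} [Fintype S] [DecidableEq S] {Ω : Type}
    (M : Arm S) (x : ℕ → S → Bool → ℝ) (π : CPolicy S)
    (F : ℕ → S → Bool → ℝ → S) (U : ℕ → ℕ → Ω → ℝ) (N t : ℕ) : Set Ω :=
  {ω | ((∑ s, if isActive x t s then Zc M π F U N t ω s else 0 : ℕ) : ℝ) ≤ M.α t * N ∧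
    M.α t * N ≤ ((∑ s, if isActive x t s then Zc M π F U N t ω s else 0) +
      (∑ s, if isNeutral x t s then Zc M π F U N t ω s else 0) : ℕ)}

section Helpers

lemma greedyAlloc_zero {S : Type} [DecidableEq S] (l : List (S × ℕ)) :
    greedyAlloc 0 l = fun _ => 0 := by
  induction l with
  | nil => rfl
  | cons sc l ih => funext s; simp [greedyAlloc, ih]

lemma greedyAlloc_append {S : Type} [DecidableEq S] (l1 l2 : List (S × ℕ)) (B : ℕ) (s : S) :
    greedyAlloc B (l1 ++ l2) s
      = greedyAlloc B l1 s + greedyAlloc (B - min B (l1.map Prod.snd).sum) l2 s := by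
  induction l1 generalizing B with
  | nil => simp [greedyAlloc]
  | cons sc l1 ih =>
    simp only [List.cons_append, greedyAlloc, List.map_cons, List.sum_cons]
    rw [ih]
    have h : B - min B sc.2 - min (B - min B sc.2) (l1.map Prod.snd).sum
        = B - min B (sc.2 + (l1.map Prod.snd).sum) := by omega
    rw [h, add_assoc]

lemma greedyAlloc_full {S : Type} [DecidableEq S] (l : List (S × ℕ)) (B : ℕ)
    (h : (l.map Prod.snd).sum ≤ B) (s : S) :
    greedyAlloc B l s = (l.map (fun p => if s = p.1 then p.2 else 0)).sum := by
  induction l generalizing B with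
  | nil => simp [greedyAlloc]
  | cons sc l ih =>
    simp only [List.map_cons, List.sum_cons] at h ⊢
    have hc : min B sc.2 = sc.2 := by omega
    simp only [greedyAlloc, hc]
    rw [ih (B - sc.2) (by omega)]

lemma greedyAlloc_exhaust {S : Type} [DecidableEq S] (l1 l2 : List (S × ℕ)) (B : ℕ)
    (h : B ≤ (l1.map Prod.snd).sum) (s : S) :
    greedyAlloc B (l1 ++ l2) s = greedyAlloc B l1 s := by
  rw [greedyAlloc_append]
  have h2 : min B (l1.map Prod.snd).sum = B := by omega
  rw [h2, Nat.sub_self, greedyAlloc_zero]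
  simp

lemma filter_map_sum_aux {S : Type} (l : List S) (p : S → Bool) (f : S → ℕ) :
    ((l.filter p).map f).sum = (l.map (fun s => if p s then f s else 0)).sum := by
  induction l with
  | nil => rfl
  | cons a l ih => by_cases hp : p a <;> simp [List.filter_cons, hp, ih]

lemma sum_filter_ord {S : Type} [Fintype S] [DecidableEq S] (l : List S) (hl : l.Nodup)
    (hc : ∀ s : S, s ∈ l) (p : S → Bool) (f : S → ℕ) :
    ((l.filter p).map f).sum = ∑ s, if p s then f s else 0 := by
  rw [filter_map_sum_aux]
  have huniv : l.toFinset = Finset.univ := Finset.eq_univ_iff_forall.2 (by simpa using hc)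
  rw [← List.sum_toFinset _ hl, huniv]

end Helpers
open Classical in
/-- On the event `Δ_t` — the total number of arms in fluid-active
states is at most the budget `α_t N`, which is at most the total number of arms in
fluid-active plus fluid-neutral states — a fluid-priority policy `π_F` and its
budget-relaxed version `π_R` (built from the same optimal occupation measure and
priority order) make identical decisions: `π_R(t, Z_t^N) = π_F(t, Z_t^N)`. -/
theorem relaxed_eq_fluid_priority_on_Delta
    {S : Type} [Fintype S] [DecidableEq S] (M : Arm S)
    (x : ℕ → S → Bool → ℝ) (hx : LPOptimal M x)
    (P : ℕ → S → ℝ) (ord : ℕ → List S) (hord : OrdOK P ord)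
    (hα0 : ∀ t, 0 ≤ M.α t) (t : ℕ) (Z : S → ℕ)
    (h1 : ((∑ s, if isActive x t s then Z s else 0 : ℕ) : ℝ) ≤ M.α t * (∑ s, Z s : ℕ))
    (h2 : M.α t * (∑ s, Z s : ℕ) ≤
      ((∑ s, if isActive x t s then Z s else 0) +
        (∑ s, if isNeutral x t s then Z s else 0) : ℕ)) :
    rpPolicy M x ord t Z = fpPolicy M x ord t Z := by
  classical
  have hnd : (ord t).Nodup := (hord t).1
  have hcm : ∀ s : S, s ∈ ord t := (hord t).2.1
  set Nn : ℕ := ∑ s, Z s with hNn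
  set A : ℕ := ∑ s, if isActive x t s then Z s else 0 with hA
  set Nu : ℕ := ∑ s, if isNeutral x t s then Z s else 0 with hNu
  set B : ℕ := ⌊M.α t * Nn⌋₊ with hB
  have hAB : A ≤ B := Nat.le_floor h1
  have hBAN : B ≤ A + Nu := by
    have := Nat.floor_le_floor h2
    simpa [hB, ← Nat.cast_add] using this
  -- cap lists
  set actL : List S := (ord t).filter fun s => decide (isActive x t s) with hactL
  set neuL : List S := (ord t).filter fun s => decide (isNeutral x t s) with hneuL
  set inaL : List S := (ord t).filter fun s => decide (isInactive x t s) with hinaL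
  set caps1 : List (S × ℕ) := actL.map fun s => (s, Z s) with hcaps1
  set caps2 : List (S × ℕ) := neuL.map fun s => (s, min (Z s) ⌊(Nn : ℝ) * x t s true⌋₊)
    with hcaps2
  set caps3 : List (S × ℕ) := neuL.map fun s => (s, Z s - min (Z s) ⌊(Nn : ℝ) * x t s true⌋₊)
    with hcaps3
  set caps4 : List (S × ℕ) := inaL.map fun s => (s, Z s) with hcaps4
  have hsum1 : (caps1.map Prod.snd).sum = A := by
    rw [hcaps1, List.map_map]
    rw [hactL, sum_filter_ord _ hnd hcm]
    simp [hA]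
  have hsum2 : (caps2.map Prod.snd).sum + (caps3.map Prod.snd).sum = Nu := by
    rw [hcaps2, hcaps3, List.map_map, List.map_map, hneuL,
      sum_filter_ord _ hnd hcm, sum_filter_ord _ hnd hcm, ← Finset.sum_add_distrib]
    rw [hNu]
    refine Finset.sum_congr rfl fun s _ => ?_
    by_cases h : isNeutral x t s <;> simp [h] <;> omega
  -- per-state allocation of active caps under full budget
  have hfull1 : ∀ s, greedyAlloc B caps1 s = if isActive x t s then Z s else 0 := by
    intro s
    rw [greedyAlloc_full _ _ (hsum1.trans_le hAB), hcaps1, List.map_map]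
    have : ((fun p : S × ℕ => if s = p.1 then p.2 else 0) ∘ fun s' => (s', Z s'))
        = fun s' => if s = s' then Z s' else 0 := rfl
    rw [this, hactL, sum_filter_ord _ hnd hcm]
    have : ∀ s' : S, (if decide (isActive x t s') then (if s = s' then Z s' else 0) else 0)
        = if s = s' then (if isActive x t s' then Z s' else 0) else 0 := by
      intro s'
      by_cases h : isActive x t s' <;> by_cases h2 : s = s' <;> simp [h, h2]
    rw [Finset.sum_congr rfl fun s' _ => this s']
    simp
  -- the main pull equality
  have hpull : rpPull M x ord t Z = fpPull M x ord t Z := by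
    funext s
    show (if isActive x t s then Z s else 0) + greedyAlloc (B - A) (caps2 ++ caps3) s
        = greedyAlloc B (caps1 ++ caps2 ++ caps3 ++ caps4) s
    have hassoc : caps1 ++ caps2 ++ caps3 ++ caps4 = caps1 ++ ((caps2 ++ caps3) ++ caps4) := by
      simp [List.append_assoc]
    have hle : B - A ≤ ((caps2 ++ caps3).map Prod.snd).sum := by
      rw [List.map_append, List.sum_append, hsum2]; omega
    rw [hassoc]
    conv_rhs => rw [greedyAlloc_append, hsum1, min_eq_right hAB,
      greedyAlloc_exhaust _ _ _ hle]
    rw [hfull1]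
  funext s a
  simp only [rpPolicy, fpPolicy, hpull]
end
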